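/- arXiv:1304.1263 — 5 statements merged into one kernel-verified Lean document; each statement's English description precedes it below -/
import Mathlib

section
/- Under the cycle transform, the fixed points of σ (on-diagonal values, σ(i)=i) correspond exactly to the singlet blocks of π, i.e., the positions i with π(i) equal to a successive minimum forming a block of size one. -/
/-- The cycle of `σ` containing `c`, written with `c` (its minimum) last. -/
noncomputable def cycleList {n : ℕ} (σ : Equiv.Perm (Fin n)) (c : Fin n) : List (Fin n) :=
  (List.range (Function.minimalPeriod (σ : Fin n → Fin n) c)).map (fun k => (σ ^ (k + 1)) c)

open scoped Classical in
/-- The heads (minima of the cycles) of `σ`, listed in increasing order. -/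
noncomputable def headsList {n : ℕ} (σ : Equiv.Perm (Fin n)) : List (Fin n) :=
  Finset.sort (Finset.univ.filter (fun c => ∀ k : ℕ, c ≤ (σ ^ k) c)) (· ≤ ·)

/-- The one-line word of the cycle transform of `σ`. -/
noncomputable def cycleTransformWord {n : ℕ} (σ : Equiv.Perm (Fin n)) : List (Fin n) :=
  (headsList σ).flatMap (cycleList σ)

/-- The cycle transform of `σ`, viewed as a function on positions. -/
noncomputable def ctFun {n : ℕ} (σ : Equiv.Perm (Fin n)) (i : Fin n) : Fin n :=
  (cycleTransformWord σ).getD i.val i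

/-- Position `i` is a successive-minimum (anchor) position of the cycle transform of `σ`:
its value is smaller than all later values. -/
def IsAnchor {n : ℕ} (σ : Equiv.Perm (Fin n)) (i : Fin n) : Prop :=
  ∀ j : Fin n, i ≤ j → ctFun σ i ≤ ctFun σ j

/-- Position `i` carries a singlet block (a block of size one) of the cycle transform of `σ`. -/
def IsSingletPos {n : ℕ} (σ : Equiv.Perm (Fin n)) (i : Fin n) : Prop :=
  IsAnchor σ i ∧ (i.val = 0 ∨ ∃ j : Fin n, j.val + 1 = i.val ∧ IsAnchor σ j)

/-!
The cycle transform writes the cycles of `σ` one after another, each ending with its minimum,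
in increasing order of these minima. Hence every entry of a cycle other than its last one is
followed by something smaller, while the last one is smaller than everything after it: the
successive minima are exactly the cycle ends, the blocks are exactly the cycles, and a block
has size one exactly when its cycle is a fixed point.
-/

namespace List

variable {α : Type*} [LinearOrder α]

/-- `HeadIsMin (w.drop i)` says that position `i` of `w` is a successive minimum of `w`. -/
def HeadIsMin : List α → Prop
  | [] => False
  | a :: v => ∀ y ∈ v, a ≤ y

def IsSingletAt (w : List α) (x : α) (i : ℕ) : Prop :=
  w[i]? = some x ∧ HeadIsMin (w.drop i) ∧ (i = 0 ∨ HeadIsMin (w.drop (i - 1)))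

def BlocksEndAtMinima : List (List α) → Prop
  | [] => True
  | b :: L => (∃ t m, b = t ++ [m] ∧ (∀ y ∈ t, m < y) ∧ ∀ y ∈ L.flatten, m < y) ∧
      BlocksEndAtMinima L

theorem headIsMin_drop_iff {w : List α} {i : ℕ} (hi : i < w.length) :
    HeadIsMin (w.drop i) ↔ ∀ j (hj : j < w.length), i ≤ j → w[i] ≤ w[j] := by
  rw [drop_eq_getElem_cons hi]
  simp only [HeadIsMin, mem_drop_iff_getElem]
  constructor
  · intro h j hj hij
    obtain rfl | hij := hij.eq_or_lt
    · exact le_rfl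
    · exact h _ ⟨j - (i + 1), by omega, by simp only [show i + 1 + (j - (i + 1)) = j by omega]⟩
  · rintro h _ ⟨k, hk, rfl⟩
    exact h (i + 1 + k) (by omega) (by omega)

section AppendCons

variable {t w : List α} {m : α} (ht : ∀ y ∈ t, m < y) (hw : ∀ y ∈ w, m < y)
include ht hw

theorem headIsMin_drop_append_cons_iff {i : ℕ} :
    HeadIsMin ((t ++ m :: w).drop i) ↔
      i = t.length ∨ t.length < i ∧ HeadIsMin (w.drop (i - t.length - 1)) := by
  rcases lt_trichotomy i t.length with hi | rfl | hi
  · rw [drop_append, drop_eq_getElem_cons hi, Nat.sub_eq_zero_of_le hi.le, drop_zero]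
    refine iff_of_false (fun h => ?_) (by omega)
    exact (ht _ (getElem_mem hi)).not_ge (h m (by simp))
  · simpa [HeadIsMin] using fun y hy => (hw y hy).le
  · obtain ⟨k, rfl⟩ := Nat.exists_eq_add_of_lt hi
    simp [drop_append, drop_eq_nil_of_le (show t.length ≤ t.length + k + 1 by omega),
      show t.length + k + 1 - t.length = k + 1 by omega,
      show t.length + k + 1 ≠ t.length by omega]

theorem exists_isSingletAt_append_cons_iff {x : α} :
    (∃ i, IsSingletAt (t ++ m :: w) x i) ↔ (t = [] ∧ x = m) ∨ ∃ j, IsSingletAt w x j := by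
  have getElem?_eq (j : ℕ) : (t ++ m :: w)[t.length + j + 1]? = w[j]? := by
    rw [getElem?_append_right (by omega), show t.length + j + 1 - t.length = j + 1 by omega,
      getElem?_cons_succ]
  simp only [IsSingletAt, headIsMin_drop_append_cons_iff ht hw]
  constructor
  · rintro ⟨i, hx, hi, hprev⟩
    rcases hi with rfl | ⟨hlt, hi⟩
    · have ht : t.length = 0 := by omega
      rw [length_eq_zero_iff] at ht
      subst ht
      exact Or.inl ⟨rfl, by simpa [eq_comm] using hx⟩
    · obtain ⟨j, rfl⟩ := Nat.exists_eq_add_of_lt hlt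
      refine Or.inr ⟨j, by rwa [← getElem?_eq], ?_, ?_⟩
      · rwa [show t.length + j + 1 - t.length - 1 = j by omega] at hi
      rcases hprev with h | h | ⟨h, hprev⟩
      · omega
      · omega
      · rw [show t.length + j + 1 - 1 - t.length - 1 = j - 1 by omega] at hprev
        exact Or.inr hprev
  · rintro (⟨rfl, rfl⟩ | ⟨j, hx, hj, hprev⟩)
    · exact ⟨0, by simp, Or.inl rfl, Or.inl rfl⟩
    · refine ⟨t.length + j + 1, by rwa [getElem?_eq], Or.inr ⟨by omega, ?_⟩, Or.inr ?_⟩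
      · rwa [show t.length + j + 1 - t.length - 1 = j by omega]
      rcases Nat.eq_zero_or_pos j with rfl | hj0
      · exact Or.inl (by simp)
      · refine Or.inr ⟨by omega, ?_⟩
        rw [show t.length + j + 1 - 1 - t.length - 1 = j - 1 by omega]
        exact hprev.resolve_left hj0.ne'

end AppendCons

theorem exists_isSingletAt_flatten_iff {L : List (List α)} (hL : BlocksEndAtMinima L) {x : α} :
    (∃ i, IsSingletAt L.flatten x i) ↔ [x] ∈ L := by
  induction L with
  | nil => simp [IsSingletAt]
  | cons b L ih =>
    obtain ⟨⟨t, m, rfl, ht, hm⟩, hL⟩ := hL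
    rw [flatten_cons, append_assoc, singleton_append, exists_isSingletAt_append_cons_iff ht hm,
      ih hL, mem_cons]
    simp [singleton_eq_append_iff, eq_comm]

end List

namespace CycleTransform

open Function Equiv.Perm

variable {n : ℕ} (σ : Equiv.Perm (Fin n))

noncomputable def blocks : List (List (Fin n)) :=
  (headsList σ).map (cycleList σ)

theorem cycleTransformWord_eq_flatten_blocks : cycleTransformWord σ = (blocks σ).flatten :=
  List.flatMap_def

theorem minimalPeriod_pos (c : Fin n) : 0 < minimalPeriod σ c :=
  minimalPeriod_pos_of_mem_periodicPts (σ.injective.mem_periodicPts c)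

theorem nodup_cycleList (c : Fin n) : (cycleList σ c).Nodup := by
  refine List.nodup_range.map_on fun j hj k hk h => iterate_injOn_Iio_minimalPeriod
    (List.mem_range.1 hj) (List.mem_range.1 hk) ?_
  simpa [pow_succ', σ.injective.eq_iff, coe_pow] using h

theorem exists_cycleList_eq_append_singleton (c : Fin n) : ∃ t, cycleList σ c = t ++ [c] := by
  obtain ⟨p, hp⟩ := Nat.exists_eq_add_one_of_ne_zero (minimalPeriod_pos σ c).ne'
  refine ⟨(List.range p).map fun k => (σ ^ (k + 1)) c, ?_⟩
  rw [cycleList, hp, List.range_succ, List.map_append, List.map_singleton, ← hp, coe_pow,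
    iterate_minimalPeriod]

variable {σ}

theorem mem_cycleList {c x : Fin n} : x ∈ cycleList σ c ↔ σ.SameCycle c x := by
  simp only [cycleList, List.mem_map, List.mem_range]
  constructor
  · rintro ⟨k, -, rfl⟩
    exact sameCycle_pow_right.2 (SameCycle.refl _ _)
  · intro h
    have h' : σ.SameCycle c (σ⁻¹ x) := sameCycle_apply_right.1 (by simpa using h)
    obtain ⟨k, hk⟩ := h'.exists_nat_pow_eq
    refine ⟨k % minimalPeriod σ c, Nat.mod_lt _ (minimalPeriod_pos σ c), ?_⟩
    rw [pow_succ', Equiv.Perm.mul_apply, coe_pow, iterate_mod_minimalPeriod_eq, ← coe_pow, hk,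
      coe_inv, Equiv.apply_symm_apply]

theorem mem_headsList {c : Fin n} : c ∈ headsList σ ↔ ∀ k : ℕ, c ≤ (σ ^ k) c := by
  simp [headsList]

theorem pairwise_lt_headsList : (headsList σ).Pairwise (· < ·) :=
  (Finset.sortedLT_sort _).pairwise

theorem le_of_mem_headsList {c y : Fin n} (hc : c ∈ headsList σ) (h : σ.SameCycle c y) :
    c ≤ y := by
  obtain ⟨k, rfl⟩ := h.exists_nat_pow_eq
  exact mem_headsList.1 hc k

theorem exists_mem_headsList_sameCycle (x : Fin n) : ∃ c ∈ headsList σ, σ.SameCycle c x := by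
  classical
  obtain ⟨c, hc, hmin⟩ := (Finset.univ.filter (σ.SameCycle x)).exists_min_image id
    ⟨x, by simpa using SameCycle.refl σ x⟩
  simp only [Finset.mem_filter, Finset.mem_univ, true_and, id] at hc hmin
  exact ⟨c, mem_headsList.2 fun k => hmin _ (sameCycle_pow_right.2 hc), hc.symm⟩

theorem exists_cycleList_eq_append_singleton_lt {c : Fin n} (hc : c ∈ headsList σ) :
    ∃ t, cycleList σ c = t ++ [c] ∧ ∀ y ∈ t, c < y := by
  obtain ⟨t, ht⟩ := exists_cycleList_eq_append_singleton σ c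
  have hct : c ∉ t := by
    have := nodup_cycleList σ c
    rw [ht, List.nodup_append] at this
    exact fun h => this.2.2 c h c (List.mem_singleton_self c) rfl
  refine ⟨t, ht, fun y hy => (le_of_mem_headsList hc ?_).lt_of_ne ?_⟩
  · exact mem_cycleList.1 (ht ▸ List.mem_append_left _ hy)
  · exact (ne_of_mem_of_not_mem hy hct).symm

theorem blocksEndAtMinima_map_cycleList {hs : List (Fin n)} (hsorted : hs.Pairwise (· < ·))
    (hheads : ∀ c ∈ hs, c ∈ headsList σ) : (hs.map (cycleList σ)).BlocksEndAtMinima := by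
  induction hs with
  | nil => trivial
  | cons c hs ih =>
    rw [List.pairwise_cons] at hsorted
    obtain ⟨t, ht, hlt⟩ := exists_cycleList_eq_append_singleton_lt (hheads c List.mem_cons_self)
    refine ⟨⟨t, c, ht, hlt, fun y hy => ?_⟩, ih hsorted.2 fun d hd => hheads d (.tail _ hd)⟩
    obtain ⟨b, hb, hy⟩ := List.mem_flatten.1 hy
    obtain ⟨d, hd, rfl⟩ := List.mem_map.1 hb
    exact (hsorted.1 d hd).trans_le
      (le_of_mem_headsList (hheads d (.tail _ hd)) (mem_cycleList.1 hy))

variable (σ)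

theorem blocksEndAtMinima_blocks : (blocks σ).BlocksEndAtMinima :=
  blocksEndAtMinima_map_cycleList pairwise_lt_headsList fun _ => id

theorem nodup_cycleTransformWord : (cycleTransformWord σ).Nodup := by
  refine List.nodup_flatMap.2 ⟨fun c _ => nodup_cycleList σ c,
    pairwise_lt_headsList.imp_of_mem fun hc hc' hlt x hx hx' => hlt.ne (le_antisymm ?_ ?_)⟩
  · exact le_of_mem_headsList hc ((mem_cycleList.1 hx).trans (mem_cycleList.1 hx').symm)
  · exact le_of_mem_headsList hc' ((mem_cycleList.1 hx').trans (mem_cycleList.1 hx).symm)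

theorem mem_cycleTransformWord (x : Fin n) : x ∈ cycleTransformWord σ := by
  obtain ⟨c, hc, hcx⟩ := exists_mem_headsList_sameCycle (σ := σ) x
  exact List.mem_flatMap.2 ⟨c, hc, mem_cycleList.2 hcx⟩

theorem length_cycleTransformWord : (cycleTransformWord σ).length = n := by
  classical
  rw [← List.toFinset_card_of_nodup (nodup_cycleTransformWord σ),
    Finset.eq_univ_of_forall fun x => List.mem_toFinset.2 (mem_cycleTransformWord σ x),
    Finset.card_univ, Fintype.card_fin]

theorem ctFun_eq_getElem (i : Fin n) :
    ctFun σ i = (cycleTransformWord σ)[i.val]'(by rw [length_cycleTransformWord]; exact i.2) :=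
  List.getD_eq_getElem _ _ _

theorem isAnchor_iff (i : Fin n) :
    IsAnchor σ i ↔ ((cycleTransformWord σ).drop i).HeadIsMin := by
  rw [List.headIsMin_drop_iff (by rw [length_cycleTransformWord]; exact i.2)]
  simp only [IsAnchor, ctFun_eq_getElem]
  constructor
  · intro h j hj hij
    exact h ⟨j, length_cycleTransformWord σ ▸ hj⟩ hij
  · intro h j hij
    exact h j _ hij

theorem exists_isSingletPos_iff (x : Fin n) :
    (∃ i : Fin n, ctFun σ i = x ∧ IsSingletPos σ i) ↔
      ∃ i, (cycleTransformWord σ).IsSingletAt x i := by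
  constructor
  · rintro ⟨i, rfl, hi, hprev⟩
    refine ⟨i, by simp [ctFun_eq_getElem], (isAnchor_iff σ i).1 hi, hprev.imp_right ?_⟩
    rintro ⟨j, hj, hanchor⟩
    rw [← hj, Nat.add_sub_cancel]
    exact (isAnchor_iff σ j).1 hanchor
  · rintro ⟨i, hx, hi, hprev⟩
    obtain ⟨hin, hx⟩ := List.getElem?_eq_some_iff.1 hx
    rw [length_cycleTransformWord] at hin
    refine ⟨⟨i, hin⟩, by rwa [ctFun_eq_getElem], (isAnchor_iff σ _).2 hi, ?_⟩
    rcases Nat.eq_zero_or_pos i with h0 | hpos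
    · exact Or.inl h0
    · exact Or.inr ⟨⟨i - 1, by omega⟩, by simp only; omega,
        (isAnchor_iff σ _).2 (hprev.resolve_left hpos.ne')⟩

theorem singleton_mem_blocks_iff (x : Fin n) : [x] ∈ blocks σ ↔ σ x = x := by
  simp only [blocks, List.mem_map]
  constructor
  · rintro ⟨c, -, hc⟩
    have hp : minimalPeriod σ c = 1 := by simpa [cycleList] using congrArg List.length hc
    have hfix : σ c = c := minimalPeriod_eq_one_iff_isFixedPt.1 hp
    rw [cycleList, hp] at hc
    simp only [List.range_one, List.map_singleton, zero_add, pow_one, hfix,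
      List.singleton_inj] at hc
    rwa [← hc]
  · intro hx
    refine ⟨x, mem_headsList.2 fun k => (pow_apply_eq_self_of_apply_eq_self hx k).ge, ?_⟩
    rw [cycleList, minimalPeriod_eq_one_iff_isFixedPt.2 hx]
    simp [hx]

end CycleTransform

/-- The fixed points of `σ` are exactly the values sitting at singlet blocks of its
cycle transform. -/
theorem fixedPoints_eq_singletBlocks (n : ℕ) (σ : Equiv.Perm (Fin n)) (x : Fin n) :
    σ x = x ↔ ∃ i : Fin n, ctFun σ i = x ∧ IsSingletPos σ i := by
  rw [CycleTransform.exists_isSingletPos_iff, CycleTransform.cycleTransformWord_eq_flatten_blocks,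
    List.exists_isSingletAt_flatten_iff (CycleTransform.blocksEndAtMinima_blocks σ),
    CycleTransform.singleton_mem_blocks_iff]
end

section
/- Under the cycle transform, the set of over-diagonal values of σ (values σ(i) with σ(i)>i) equals the set of non-singlet ascent values of its cycle transform π, and the set of under-diagonal values of σ equals the set of descent values of π. Here π is extended with π(0)=0, an ascent value is π(i) with π(i-1)<π(i) and a descent value is π(i) with π(i-1)>π(i). -/
/-- `i` is an ascent position of the cycle transform `π` of `σ` (with the convention
`π(0) = 0`, so the first position is an ascent). -/
def IsAscentPos {n : ℕ} (σ : Equiv.Perm (Fin n)) (i : Fin n) : Prop :=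
  i.val = 0 ∨ ∃ j : Fin n, j.val + 1 = i.val ∧ ctFun σ j < ctFun σ i

/-- `i` is a descent position of the cycle transform `π` of `σ`. -/
def IsDescentPos {n : ℕ} (σ : Equiv.Perm (Fin n)) (i : Fin n) : Prop :=
  ∃ j : Fin n, j.val + 1 = i.val ∧ ctFun σ i < ctFun σ j

/-! The word of the cycle transform lists the cycles of `σ` by increasing minimum, each cycle
`c` written as `σ c, σ² c, …, c`. Inside a block the letter before `x` is `σ⁻¹ x`, so there
ascents and descents at `x` compare `σ⁻¹ x` with `x`. The first letter `x = σ c` of a block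
follows the minimum of the previous block, which is smaller than `c = σ⁻¹ x ≤ x`, so it is an
ascent and never a descent, and `σ⁻¹ x < x` unless `x` is a fixed point. The anchors
(right-to-left minima) are exactly the cycle minima, so the singlet positions are exactly the
fixed points. -/

open Equiv Function

namespace Equiv.Perm

def IsCycleMin {α : Type*} [LE α] (σ : Perm α) (c : α) : Prop :=
  ∀ k : ℕ, c ≤ (σ ^ k) c

theorem IsCycleMin.le_apply {α : Type*} [LE α] {σ : Perm α} {c : α} (hc : σ.IsCycleMin c) :
    c ≤ σ c := by
  simpa using hc 1

theorem symm_pow_succ_apply {α : Type*} (σ : Perm α) (k : ℕ) (c : α) :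
    σ.symm ((σ ^ (k + 1)) c) = (σ ^ k) c := by
  rw [pow_succ', Perm.mul_apply, symm_apply_apply]

theorem exists_isCycleMin_sameCycle {α : Type*} [LinearOrder α] [Finite α] (σ : Perm α)
    (x : α) : ∃ c, σ.IsCycleMin c ∧ σ.SameCycle c x := by
  obtain ⟨c, hxc, hmin⟩ := Set.exists_min_image {y | σ.SameCycle x y} id (Set.toFinite _)
    ⟨x, SameCycle.refl σ x⟩
  exact ⟨c, fun k => hmin _ (sameCycle_pow_right.2 hxc), hxc.symm⟩

theorem IsCycleMin.le_of_sameCycle {α : Type*} [LE α] [Finite α] {σ : Perm α} {c x : α}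
    (hc : σ.IsCycleMin c) (h : σ.SameCycle c x) : c ≤ x := by
  obtain ⟨k, rfl⟩ := h.exists_nat_pow_eq
  exact hc k

variable {α : Type*} [PartialOrder α] [Finite α] {σ : Perm α} {c d : α}

theorem IsCycleMin.eq_of_sameCycle (hc : σ.IsCycleMin c) (hd : σ.IsCycleMin d)
    (h : σ.SameCycle c d) : c = d :=
  (hc.le_of_sameCycle h).antisymm (hd.le_of_sameCycle h.symm)

theorem IsCycleMin.not_isCycleMin_apply_iff (hc : σ.IsCycleMin c) :
    ¬ σ.IsCycleMin (σ c) ↔ c < σ c := by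
  rw [hc.le_apply.lt_iff_ne, ne_comm, not_iff_not]
  exact ⟨fun h => (hc.eq_of_sameCycle h (sameCycle_apply_right.2 (SameCycle.refl σ c))).symm,
    fun h => by rw [h]; exact hc⟩

theorem IsCycleMin.isCycleMin_pow_iff (hc : σ.IsCycleMin c) {k : ℕ}
    (hk : k < minimalPeriod σ c) : σ.IsCycleMin ((σ ^ k) c) ↔ k = 0 := by
  refine ⟨fun h => ?_, by rintro rfl; exact hc⟩
  have hpow : (σ ^ k) c = c :=
    (hc.eq_of_sameCycle h (sameCycle_pow_right.2 (SameCycle.refl σ c))).symm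
  rw [coe_pow] at hpow
  exact (iterate_eq_iterate_iff_of_lt_minimalPeriod (m := k) (n := 0) hk
    (minimalPeriod_pos_of_mem_periodicPts (σ.injective.mem_periodicPts c))).1 hpow

end Equiv.Perm

open Equiv.Perm

section

variable {n : ℕ} (σ : Perm (Fin n))

theorem mem_headsList {c : Fin n} : c ∈ headsList σ ↔ σ.IsCycleMin c := by
  classical
  simp [headsList, IsCycleMin]

theorem pairwise_lt_headsList : (headsList σ).Pairwise (· < ·) := by
  classical
  exact (Finset.sortedLT_sort _).pairwise

theorem length_cycleList (c : Fin n) : (cycleList σ c).length = minimalPeriod σ c := by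
  simp [cycleList]

theorem getElem_cycleList (c : Fin n) {k : ℕ} (hk : k < (cycleList σ c).length) :
    (cycleList σ c)[k] = (σ ^ (k + 1)) c := by
  simp [cycleList]

theorem coe_cycleList (c : Fin n) :
    (cycleList σ c : Cycle (Fin n)) = periodicOrbit σ (σ c) := by
  rw [periodicOrbit_def, minimalPeriod_apply (σ.injective.mem_periodicPts c), cycleList]
  rfl

theorem nodup_cycleList (c : Fin n) : (cycleList σ c).Nodup := by
  rw [← Cycle.nodup_coe_iff, coe_cycleList]
  exact nodup_periodicOrbit

theorem mem_cycleList_iff {c x : Fin n} : x ∈ cycleList σ c ↔ σ.SameCycle c x := by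
  rw [← Cycle.mem_coe_iff, coe_cycleList, mem_periodicOrbit_iff (σ.injective.mem_periodicPts _),
    ← sameCycle_apply_left]
  refine ⟨fun ⟨k, hk⟩ => ⟨k, ?_⟩, fun h => ?_⟩
  · rw [← hk, zpow_natCast, coe_pow]
  · obtain ⟨k, rfl⟩ := h.exists_nat_pow_eq
    exact ⟨k, by rw [coe_pow]⟩

theorem nodup_cycleTransformWord : (cycleTransformWord σ).Nodup := by
  refine List.nodup_flatMap.2 ⟨fun c _ => nodup_cycleList σ c, ?_⟩
  refine (pairwise_lt_headsList σ).imp_of_mem fun {c d} hc hd hcd x hxc hxd => hcd.ne ?_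
  exact ((mem_headsList σ).1 hc).eq_of_sameCycle ((mem_headsList σ).1 hd)
    (((mem_cycleList_iff σ).1 hxc).trans ((mem_cycleList_iff σ).1 hxd).symm)

theorem mem_cycleTransformWord (x : Fin n) : x ∈ cycleTransformWord σ := by
  obtain ⟨c, hc, hcx⟩ := σ.exists_isCycleMin_sameCycle x
  exact List.mem_flatMap.2 ⟨c, (mem_headsList σ).2 hc, (mem_cycleList_iff σ).2 hcx⟩

theorem length_cycleTransformWord : (cycleTransformWord σ).length = n := by
  classical
  simpa using Fintype.card_congr ((nodup_cycleTransformWord σ).getEquivOfForallMemList _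
    (mem_cycleTransformWord σ))

theorem ctFun_eq_getElem (i : Fin n) :
    ctFun σ i = (cycleTransformWord σ)[i.val]'(by rw [length_cycleTransformWord]; exact i.isLt) :=
  List.getD_eq_getElem _ _ _

theorem ctFun_injective : Injective (ctFun σ) := fun i j h => by
  rw [ctFun_eq_getElem, ctFun_eq_getElem, (nodup_cycleTransformWord σ).getElem_inj_iff] at h
  exact Fin.ext h

theorem ctFun_surjective : Surjective (ctFun σ) :=
  Finite.injective_iff_surjective.1 (ctFun_injective σ)

section Split

variable {pre post : List (Fin n)} {c : Fin n}

theorem cycleTransformWord_eq_of_split (h : headsList σ = pre ++ c :: post) :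
    cycleTransformWord σ =
      pre.flatMap (cycleList σ) ++ (cycleList σ c ++ post.flatMap (cycleList σ)) := by
  rw [cycleTransformWord, h, List.flatMap_append, List.flatMap_cons]

theorem isCycleMin_of_split (h : headsList σ = pre ++ c :: post) : σ.IsCycleMin c :=
  (mem_headsList σ).1 (by simp [h])

theorem lt_of_split (h : headsList σ = pre ++ c :: post) {d : Fin n} (hd : d ∈ post) :
    c < d := by
  have hsorted := pairwise_lt_headsList σ
  rw [h, List.pairwise_append] at hsorted
  exact (List.pairwise_cons.1 hsorted.2.1).1 d hd

theorem length_flatMap_add_lt (h : headsList σ = pre ++ c :: post) {k : ℕ}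
    (hk : k < minimalPeriod σ c) : (pre.flatMap (cycleList σ)).length + k < n := by
  have hlen := length_cycleTransformWord σ
  rw [cycleTransformWord_eq_of_split σ h] at hlen
  simp only [List.length_append, length_cycleList] at hlen
  omega

theorem ctFun_eq_pow_of_split (h : headsList σ = pre ++ c :: post) {k : ℕ}
    (hk : k < minimalPeriod σ c) {i : Fin n}
    (hi : i.val = (pre.flatMap (cycleList σ)).length + k) : ctFun σ i = (σ ^ (k + 1)) c := by
  rw [ctFun_eq_getElem, List.getElem_of_eq (cycleTransformWord_eq_of_split σ h),
    List.getElem_append_right (by omega),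
    List.getElem_append_left (by rw [length_cycleList]; omega)]
  simp [hi, getElem_cycleList]

theorem ctFun_eq_cycleMin_of_split (h : headsList σ = pre ++ c :: post) {i : Fin n}
    (hi : i.val = (pre.flatMap (cycleList σ)).length + (minimalPeriod σ c - 1)) :
    ctFun σ i = c := by
  have hm := minimalPeriod_pos_of_mem_periodicPts (σ.injective.mem_periodicPts c)
  rw [ctFun_eq_pow_of_split σ h (by omega) hi, Nat.sub_add_cancel hm, coe_pow,
    iterate_minimalPeriod]

theorem le_ctFun_of_split (h : headsList σ = pre ++ c :: post) {j : Fin n}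
    (hj : (pre.flatMap (cycleList σ)).length ≤ j.val) : c ≤ ctFun σ j := by
  have hmem : ctFun σ j ∈ cycleList σ c ++ post.flatMap (cycleList σ) := by
    rw [ctFun_eq_getElem, List.getElem_of_eq (cycleTransformWord_eq_of_split σ h),
      List.getElem_append_right hj]
    exact List.getElem_mem _
  rcases List.mem_append.1 hmem with hx | hx
  · exact (isCycleMin_of_split σ h).le_of_sameCycle ((mem_cycleList_iff σ).1 hx)
  · obtain ⟨d, hd, hx⟩ := List.mem_flatMap.1 hx
    exact (lt_of_split σ h hd).le.trans
      (((mem_headsList σ).1 (by simp [h, hd])).le_of_sameCycle ((mem_cycleList_iff σ).1 hx))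

end Split

theorem exists_block_offset (i : Fin n) :
    ∃ pre c post k, headsList σ = pre ++ c :: post ∧ k < minimalPeriod σ c ∧
      i.val = (pre.flatMap (cycleList σ)).length + k ∧ ctFun σ i = (σ ^ (k + 1)) c := by
  obtain ⟨c, hc, hcx⟩ := σ.exists_isCycleMin_sameCycle (ctFun σ i)
  obtain ⟨pre, post, h⟩ := List.append_of_mem ((mem_headsList σ).2 hc)
  obtain ⟨k, hk, hx⟩ := List.getElem_of_mem ((mem_cycleList_iff σ).2 hcx)
  rw [getElem_cycleList] at hx
  rw [length_cycleList] at hk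
  have hpos := ctFun_eq_pow_of_split σ h hk (i := ⟨_, length_flatMap_add_lt σ h hk⟩) rfl
  refine ⟨pre, c, post, k, h, hk, ?_, hx.symm⟩
  rw [← ctFun_injective σ (hpos.trans hx)]

theorem isAnchor_iff (i : Fin n) : IsAnchor σ i ↔ σ.IsCycleMin (ctFun σ i) := by
  obtain ⟨pre, c, post, k, h, hk, hi, hx⟩ := exists_block_offset σ i
  have hc := isCycleMin_of_split σ h
  have hcx : σ.SameCycle c (ctFun σ i) := hx ▸ sameCycle_pow_right.2 (SameCycle.refl σ c)
  constructor
  · intro hanchor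
    let last : Fin n := ⟨_, length_flatMap_add_lt σ h (k := minimalPeriod σ c - 1) (by omega)⟩
    have hle := hanchor last (by rw [Fin.le_def, hi]; dsimp [last]; omega)
    rw [ctFun_eq_cycleMin_of_split σ h (i := last) rfl] at hle
    rw [le_antisymm hle (hc.le_of_sameCycle hcx)]
    exact hc
  · intro hmin j hij
    rw [← hc.eq_of_sameCycle hmin hcx]
    exact le_ctFun_of_split σ h (by rw [Fin.le_def] at hij; omega)

theorem isCycleMin_symm_ctFun_of_val_eq_zero {i : Fin n} (hi0 : i.val = 0) :
    σ.IsCycleMin (σ.symm (ctFun σ i)) := by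
  obtain ⟨pre, c, post, k, h, -, hi, hx⟩ := exists_block_offset σ i
  rw [hx, symm_pow_succ_apply, show k = 0 by omega, pow_zero]
  exact isCycleMin_of_split σ h

theorem ctFun_eq_symm_of_succ_eq {i j : Fin n} (hj : j.val + 1 = i.val)
    (hmin : ¬ σ.IsCycleMin (σ.symm (ctFun σ i))) : ctFun σ j = σ.symm (ctFun σ i) := by
  obtain ⟨pre, c, post, k, h, hk, hi, hx⟩ := exists_block_offset σ i
  rw [hx, symm_pow_succ_apply] at hmin ⊢
  have hk0 : k ≠ 0 := fun hk0 => hmin ((isCycleMin_of_split σ h).isCycleMin_pow_iff hk |>.2 hk0)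
  rw [ctFun_eq_pow_of_split σ h (k := k - 1) (by omega) (by omega),
    Nat.sub_add_cancel (Nat.pos_of_ne_zero hk0)]

theorem isCycleMin_ctFun_of_succ_eq {i j : Fin n} (hj : j.val + 1 = i.val)
    (hmin : σ.IsCycleMin (σ.symm (ctFun σ i))) :
    σ.IsCycleMin (ctFun σ j) ∧ ctFun σ j < σ.symm (ctFun σ i) := by
  obtain ⟨pre, c, post, k, h, hk, hi, hx⟩ := exists_block_offset σ i
  rw [hx, symm_pow_succ_apply] at hmin ⊢
  obtain rfl : k = 0 := (isCycleMin_of_split σ h).isCycleMin_pow_iff hk |>.1 hmin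
  -- `ctFun σ i` opens the block of `c`, so `j` is the last position of the previous block.
  obtain ⟨pre', d, rfl⟩ : ∃ pre' d, pre = pre' ++ [d] := by
    rcases List.eq_nil_or_concat' pre with rfl | hpre
    · simp only [List.flatMap_nil, List.length_nil] at hi
      omega
    · exact hpre
  have h' : headsList σ = pre' ++ d :: c :: post := by simp [h]
  have hd := minimalPeriod_pos_of_mem_periodicPts (σ.injective.mem_periodicPts d)
  have hjd : ctFun σ j = d := ctFun_eq_cycleMin_of_split σ h' (by
    simp only [List.flatMap_append, List.length_append, List.flatMap_singleton,
      length_cycleList] at hi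
    omega)
  rw [hjd, pow_zero, Perm.one_apply]
  exact ⟨isCycleMin_of_split σ h', lt_of_split σ h' List.mem_cons_self⟩

theorem val_eq_zero_or_exists_succ_eq (i : Fin n) :
    i.val = 0 ∨ ∃ j : Fin n, j.val + 1 = i.val := by
  rcases Nat.eq_zero_or_pos i.val with hi | hi
  · exact Or.inl hi
  · exact Or.inr ⟨⟨i.val - 1, by omega⟩, by simp only; omega⟩

section Predecessor

variable {i j : Fin n}

theorem isAscentPos_iff_of_succ_eq (hj : j.val + 1 = i.val) :
    IsAscentPos σ i ↔ ctFun σ j < ctFun σ i := by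
  refine ⟨?_, fun hlt => Or.inr ⟨j, hj, hlt⟩⟩
  rintro (hi | ⟨j', hj', hlt⟩)
  · omega
  · obtain rfl : j' = j := Fin.ext (by omega)
    exact hlt

theorem isDescentPos_iff_of_succ_eq (hj : j.val + 1 = i.val) :
    IsDescentPos σ i ↔ ctFun σ i < ctFun σ j := by
  refine ⟨?_, fun hlt => ⟨j, hj, hlt⟩⟩
  rintro ⟨j', hj', hlt⟩
  obtain rfl : j' = j := Fin.ext (by omega)
  exact hlt

theorem isSingletPos_iff_of_succ_eq (hj : j.val + 1 = i.val) :
    IsSingletPos σ i ↔ IsAnchor σ i ∧ IsAnchor σ j := by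
  refine and_congr_right fun _ => ⟨?_, fun hanchor => Or.inr ⟨j, hj, hanchor⟩⟩
  rintro (hi | ⟨j', hj', hanchor⟩)
  · omega
  · obtain rfl : j' = j := Fin.ext (by omega)
    exact hanchor

end Predecessor

theorem isDescentPos_iff (i : Fin n) : IsDescentPos σ i ↔ ctFun σ i < σ.symm (ctFun σ i) := by
  rcases val_eq_zero_or_exists_succ_eq i with hi0 | ⟨j, hj⟩
  · have hle := (isCycleMin_symm_ctFun_of_val_eq_zero σ hi0).le_apply
    rw [apply_symm_apply] at hle
    exact iff_of_false (fun ⟨j, hj, _⟩ => by omega) hle.not_gt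
  · rw [isDescentPos_iff_of_succ_eq σ hj]
    by_cases hmin : σ.IsCycleMin (σ.symm (ctFun σ i))
    · have hle := hmin.le_apply
      rw [apply_symm_apply] at hle
      have hlt := (isCycleMin_ctFun_of_succ_eq σ hj hmin).2
      exact iff_of_false (hlt.trans_le hle).not_gt hle.not_gt
    · rw [ctFun_eq_symm_of_succ_eq σ hj hmin]

theorem isAscentPos_and_not_isSingletPos_iff (i : Fin n) :
    IsAscentPos σ i ∧ ¬ IsSingletPos σ i ↔ σ.symm (ctFun σ i) < ctFun σ i := by
  rcases val_eq_zero_or_exists_succ_eq i with hi0 | ⟨j, hj⟩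
  · have hmin := isCycleMin_symm_ctFun_of_val_eq_zero σ hi0
    simp only [IsAscentPos, IsSingletPos, hi0, true_or, and_true, true_and, isAnchor_iff]
    simpa using hmin.not_isCycleMin_apply_iff
  · rw [isAscentPos_iff_of_succ_eq σ hj, isSingletPos_iff_of_succ_eq σ hj, isAnchor_iff,
      isAnchor_iff]
    by_cases hmin : σ.IsCycleMin (σ.symm (ctFun σ i))
    · obtain ⟨hjmin, hlt⟩ := isCycleMin_ctFun_of_succ_eq σ hj hmin
      have hle := hmin.le_apply
      rw [apply_symm_apply] at hle
      simp only [hjmin, and_true, hlt.trans_le hle, true_and]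
      simpa using hmin.not_isCycleMin_apply_iff
    · rw [ctFun_eq_symm_of_succ_eq σ hj hmin]
      simp [hmin]

end

/-- The over-diagonal values of `σ` are exactly the non-singlet ascent values of its cycle
transform, and the under-diagonal values of `σ` are exactly the descent values of its
cycle transform. -/
theorem overUnder_eq_ascentDescent (n : ℕ) (σ : Equiv.Perm (Fin n)) :
    (∀ x : Fin n, σ.symm x < x ↔
      ∃ i : Fin n, ctFun σ i = x ∧ IsAscentPos σ i ∧ ¬ IsSingletPos σ i) ∧
    (∀ x : Fin n, x < σ.symm x ↔
      ∃ i : Fin n, ctFun σ i = x ∧ IsDescentPos σ i) := by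
  refine ⟨(ctFun_surjective σ).forall.2 fun i => ?_,
    (ctFun_surjective σ).forall.2 fun i => ?_⟩ <;>
    simp only [(ctFun_injective σ).eq_iff, exists_eq_left]
  exacts [(isAscentPos_and_not_isSingletPos_iff σ i).symm, (isDescentPos_iff σ i).symm]
end

section
/- Entry/exit lemma, first part: if S is a non-singlet family, x ∈ S is in an exit position, and S' denotes the family S with x removed, then the regular insertion of x into S' gives back S. -/
/-- A (non-singlet) sequence family: a list `(a₁,…,a_k,b_l,…,b₁)` of integers with
`k, l ≥ 1` and `b₁ < … < b_l < a₁ < … < a_k`; the `aᵢ` (the increasing prefix) are the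
reds (ascent values) and the `bⱼ` (the decreasing suffix) are the blues (descent values). -/
def IsFamilySeq (l : List ℤ) : Prop :=
  ∃ a d : List ℤ, l = a ++ d ∧ a ≠ [] ∧ d ≠ [] ∧
    a.Chain' (· < ·) ∧ d.Chain' (· > ·) ∧ ∀ u ∈ d, ∀ v ∈ a, u < v

/-- Insert `m` immediately before (the unique occurrence of) `x` in `l`. -/
def insertBefore (l : List ℤ) (x m : ℤ) : List ℤ :=
  l.takeWhile (· != x) ++ m :: l.dropWhile (· != x)

/-- `x` is in an exit position of the family `l`: inserting any `m` larger than all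
elements of `l` immediately before `x` does not yield a family. -/
def ExitPos (l : List ℤ) (x : ℤ) : Prop :=
  x ∈ l ∧ ∀ m : ℤ, (∀ y ∈ l, y < m) → ¬ IsFamilySeq (insertBefore l x m)

/-- `l'` is the regular insertion of `x` into the family `l = a ++ d` (reds `a`, blues `d`,
highest blue `b_l = max d`): if `x > b_l` then `x` is inserted, colored red, at its order
position among the reds, and if `x < b_l` then `x` is inserted, colored blue, at its order
position among the blues. -/
def RegInsert (l : List ℤ) (x : ℤ) (l' : List ℤ) : Prop :=
  ∃ a d : List ℤ, l = a ++ d ∧ a ≠ [] ∧ d ≠ [] ∧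
    a.Chain' (· < ·) ∧ d.Chain' (· > ·) ∧ (∀ u ∈ d, ∀ v ∈ a, u < v) ∧
    (((∀ u ∈ d, u < x) ∧ l' = List.orderedInsert (· ≤ ·) x a ++ d) ∨
     ((∃ u ∈ d, x < u) ∧ l' = a ++ List.orderedInsert (fun p q => q ≤ p) x d))

/-!
A sole red `x`, or the highest blue `x`, is never in an exit position: a new maximum `m` placed
just before `x` becomes a new largest red. So an element in an exit position is a red of a family
with at least two reds, or a blue below the highest blue. Removing it changes neither the colours
of the other elements nor the highest blue, and regular insertion puts it back at its sorted place
among the reds, resp. the blues.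
-/

open List

lemma exists_forall_lt (l : List ℤ) : ∃ m, ∀ y ∈ l, y < m := by
  obtain ⟨M, hM⟩ := l.finite_toSet.bddAbove
  exact ⟨M + 1, fun y hy => Int.lt_add_one_of_le (hM hy)⟩

lemma insertBefore_append_cons {a t : List ℤ} (m : ℤ) (hx : x ∉ a) :
    insertBefore (a ++ x :: t) x m = a ++ m :: x :: t := by
  have hne : ∀ y ∈ a, (y != x) = true := fun y hy => bne_iff_ne.2 (ne_of_mem_of_not_mem hy hx)
  simp [insertBefore, takeWhile_append_of_pos hne, dropWhile_append_of_pos hne]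

section

variable {a d t : List ℤ} {b x : ℤ}

lemma isFamilySeq_append_cons {m : ℤ} (hd_ne : d ≠ []) (ha : a.Pairwise (· < ·))
    (hd : d.Pairwise (· > ·)) (hda : ∀ u ∈ d, ∀ v ∈ a, u < v) (hm : ∀ y ∈ a ++ d, y < m) :
    IsFamilySeq (a ++ m :: d) := by
  refine ⟨a ++ [m], d, by simp, by simp, hd_ne, ?_, hd.isChain, ?_⟩
  · refine (pairwise_append.2 ⟨ha, pairwise_singleton _ _, ?_⟩).isChain
    simpa using fun v hv => hm v (mem_append_left d hv)
  · intro u hu v hv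
    rcases mem_append.1 hv with hv | hv
    · exact hda u hu v hv
    · rw [mem_singleton.1 hv]
      exact hm u (mem_append_right a hu)

lemma not_exitPos_cons (hd : d.Pairwise (· > ·))
    (hdx : ∀ u ∈ d, u < x) : ¬ ExitPos (x :: d) x := by
  rintro ⟨-, hexit⟩
  obtain ⟨m, hm⟩ := exists_forall_lt (x :: d)
  refine hexit m hm ?_
  rw [← nil_append (x :: d), insertBefore_append_cons m (not_mem_nil)]
  exact isFamilySeq_append_cons (cons_ne_nil x d) Pairwise.nil (pairwise_cons.2 ⟨hdx, hd⟩)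
    (by simp) hm

lemma regInsert_erase_of_mem_reds (hx : x ∈ a) (hax : a ≠ [x]) (hd_ne : d ≠ [])
    (ha : a.Pairwise (· < ·)) (hd : d.Pairwise (· > ·)) (hda : ∀ u ∈ d, ∀ v ∈ a, u < v) :
    RegInsert ((a ++ d).erase x) x (a ++ d) := by
  have hreins : (a.erase x).orderedInsert (· ≤ ·) x = a :=
    orderedInsert_erase x a hx (ha.imp le_of_lt)
  have hne : a.erase x ≠ [] := by
    rintro he
    rw [he] at hreins
    exact hax hreins.symm
  exact ⟨a.erase x, d, erase_append_left d hx, hne, hd_ne, (ha.sublist (erase_sublist ..)).isChain,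
    hd.isChain, fun u hu v hv => hda u hu v (mem_of_mem_erase hv),
    Or.inl ⟨fun u hu => hda u hu x hx, by rw [hreins]⟩⟩

lemma not_exitPos_append_cons (ha : a.Pairwise (· < ·)) (hd : (b :: t).Pairwise (· > ·))
    (hda : ∀ u ∈ b :: t, ∀ v ∈ a, u < v) : ¬ ExitPos (a ++ b :: t) b := by
  rintro ⟨-, hexit⟩
  obtain ⟨m, hm⟩ := exists_forall_lt (a ++ b :: t)
  have hb : b ∉ a := fun h => lt_irrefl b (hda b (mem_cons_self ..) b h)
  refine hexit m hm ?_
  rw [insertBefore_append_cons m hb]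
  exact isFamilySeq_append_cons (cons_ne_nil b t) ha hd hda hm

lemma regInsert_erase_of_mem_tail (hx : x ∈ t) (ha_ne : a ≠ [])
    (ha : a.Pairwise (· < ·)) (hd : (b :: t).Pairwise (· > ·))
    (hda : ∀ u ∈ b :: t, ∀ v ∈ a, u < v) :
    RegInsert ((a ++ b :: t).erase x) x (a ++ b :: t) := by
  have hxb : x < b := (pairwise_cons.1 hd).1 x hx
  have hxa : x ∉ a := fun h => lt_irrefl x (hda x (mem_cons_of_mem b hx) x h)
  have herase : (b :: t).erase x = b :: t.erase x := erase_cons_tail (by simpa using hxb.ne')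
  refine ⟨a, (b :: t).erase x, erase_append_right _ hxa, ha_ne, by simp [herase], ha.isChain,
    (hd.sublist (erase_sublist ..)).isChain, fun u hu v hv => hda u (mem_of_mem_erase hu) v hv,
    Or.inr ⟨⟨b, by simp [herase], hxb⟩, ?_⟩⟩
  rw [orderedInsert_erase x _ (mem_cons_of_mem b hx) (hd.imp le_of_lt)]

end

/-- Entry/exit lemma, first part: if `S` is a non-singlet family, `x ∈ S` is in an exit
position, and `S'` is `S` with `x` removed, then the regular insertion of `x` into `S'`
gives back `S`. -/
theorem entry_exit_first (l : List ℤ) (x : ℤ)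
    (hfam : IsFamilySeq l) (hexit : ExitPos l x) :
    RegInsert (l.erase x) x l := by
  obtain ⟨a, d, rfl, ha_ne, hd_ne, ha, hd, hda⟩ := hfam
  replace ha := IsChain.pairwise ha
  replace hd := IsChain.pairwise hd
  rcases mem_append.1 hexit.1 with hxa | hxd
  · refine regInsert_erase_of_mem_reds hxa ?_ hd_ne ha hd hda
    rintro rfl
    exact not_exitPos_cons hd (fun u hu => hda u hu x (mem_singleton_self x)) hexit
  · obtain ⟨b, t, rfl⟩ := exists_cons_of_ne_nil hd_ne
    rcases mem_cons.1 hxd with rfl | hxt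
    · exact absurd hexit (not_exitPos_append_cons ha hd hda)
    · exact regInsert_erase_of_mem_tail hxt ha_ne ha hd hda
end

section
/- The fundamental r-part multinomials satisfy the Eulerian-type recurrence N^{[r]}_{k,l} = k N^{[r]}_{k,l-1} + l N^{[r]}_{k-1,l} + (k+l-1)(N^{[r-1]}_{k-1,l-1} - r N^{[r]}_{k-1,l-1}). -/
/-- The fundamental `r`-part multinomial `N^{[r]}_{k,l}`: the number of unordered
partitions of `{1,…,k+l}` into `r` bicolored sets, each carrying a number of reds
`kᵢ ≥ 1` with `lᵢ = |Sᵢ| - kᵢ ≥ 1`, with `Σ kᵢ = k` (hence `Σ lᵢ = l`).  A partition is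
recorded as a finset of pairs `(Sᵢ, kᵢ)`. -/
noncomputable def Nfund (k l r : ℕ) : ℕ :=
  Nat.card {P : Finset (Finset (Fin (k + l)) × ℕ) //
    P.card = r ∧
    (∀ p ∈ P, 1 ≤ p.2 ∧ p.2 < p.1.card) ∧
    (P : Set (Finset (Fin (k + l)) × ℕ)).Pairwise (fun p q => Disjoint p.1 q.1) ∧
    P.sup Prod.fst = Finset.univ ∧
    ∑ p ∈ P, p.2 = k}

/-- The shifted multinomial `N^{(s)}_{k,l} = Σ_{r ≥ max(-s,1)} (r+s)! · N^{[r]}_{k,l}`,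
with `(r+s)!` interpreted as `0` when `r + s < 0`.  (All terms with `r > k + l`
vanish.) -/
noncomputable def Nshift (k l : ℕ) (s : ℤ) : ℕ :=
  ∑ r ∈ Finset.Icc 1 (k + l),
    (if 0 ≤ (r : ℤ) + s then ((r : ℤ) + s).toNat.factorial else 0) * Nfund k l r

/-!
Deleting a block `(S, a)` of type `(a, b)` (`a` red and `b` blue points) from a bicolored
partition of `C` into `r + 1` blocks leaves a bicolored partition of `C \ S` into `r` blocks, and
conversely. Counting pairs (partition, block), with the block weighted by `1`, by `a`, or by `b`,
therefore writes `(r+1) N^{[r+1]}_{k,l}`, `k N^{[r+1]}_{k,l}` and `l N^{[r+1]}_{k,l}` as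
`∑ w(a,b) C(k+l, a+b) N^{[r]}_{k-a,l-b}`; the sum of the last two, divided by `k + l`, is the
expansion of `N^{[r+1]}_{k,l}` along the block of one fixed point. Substituting these four
expansions, the terms with `a = 1` or `b = 1` cancel and the remaining ones match by
`(m+1) C(n+1, m+1) = (n+1) C(n, m)`.
-/

open Finset

section BicoloredPartition

variable {α β : Type*}

def mapBlocks (e : β ↪ α) : Finset β × ℕ ↪ Finset α × ℕ :=
  (mapEmbedding e).toEmbedding.prodMap (Function.Embedding.refl ℕ)

theorem mapBlocks_apply (e : β ↪ α) (p : Finset β × ℕ) : mapBlocks e p = (p.1.map e, p.2) := rfl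

def blockType (p : Finset α × ℕ) : ℕ × ℕ := (p.2, p.1.card - p.2)

variable [DecidableEq α] [DecidableEq β]

structure IsBicoloredPartition (k r : ℕ) (C : Finset α) (P : Finset (Finset α × ℕ)) : Prop where
  card_eq : P.card = r
  one_le_red : ∀ p ∈ P, 1 ≤ p.2
  red_lt_card : ∀ p ∈ P, p.2 < p.1.card
  pairwiseDisjoint : (P : Set (Finset α × ℕ)).PairwiseDisjoint Prod.fst
  sup_eq : P.sup Prod.fst = C
  sum_red : ∑ p ∈ P, p.2 = k

namespace IsBicoloredPartition

variable {k r : ℕ} {C : Finset α} {P : Finset (Finset α × ℕ)} {p : Finset α × ℕ}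

theorem subset (h : IsBicoloredPartition k r C P) (hp : p ∈ P) : p.1 ⊆ C :=
  h.sup_eq ▸ le_sup (f := Prod.fst) hp

theorem sum_card (h : IsBicoloredPartition k r C P) : ∑ p ∈ P, p.1.card = C.card := by
  rw [← h.sup_eq, sup_eq_biUnion, card_biUnion h.pairwiseDisjoint]

theorem red_le (h : IsBicoloredPartition k r C P) (hp : p ∈ P) : p.2 ≤ k :=
  h.sum_red ▸ single_le_sum (f := Prod.snd) (fun _ _ => Nat.zero_le _) hp

theorem card_sub_red_le (h : IsBicoloredPartition k r C P) (hp : p ∈ P) :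
    p.1.card - p.2 ≤ C.card - k := by
  have hsum : ∑ q ∈ P, (q.1.card - q.2) = C.card - k := by
    rw [sum_tsub_distrib _ fun q hq => (h.red_lt_card q hq).le, h.sum_card, h.sum_red]
  exact hsum ▸ single_le_sum (f := fun q => q.1.card - q.2) (fun _ _ => Nat.zero_le _) hp

theorem erase (h : IsBicoloredPartition k (r + 1) C P) (hp : p ∈ P) :
    IsBicoloredPartition (k - p.2) r (C \ p.1) (P.erase p) where
  card_eq := by rw [card_erase_of_mem hp, h.card_eq, Nat.add_sub_cancel]
  one_le_red q hq := h.one_le_red q (mem_of_mem_erase hq)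
  red_lt_card q hq := h.red_lt_card q (mem_of_mem_erase hq)
  pairwiseDisjoint := h.pairwiseDisjoint.subset (by simp)
  sup_eq := by
    ext x
    simp only [mem_sup, mem_erase, mem_sdiff, ← h.sup_eq]
    constructor
    · rintro ⟨q, ⟨hqp, hq⟩, hxq⟩
      exact ⟨⟨q, hq, hxq⟩, fun hxp => disjoint_left.1 (h.pairwiseDisjoint hq hp hqp) hxq hxp⟩
    · rintro ⟨⟨q, hq, hxq⟩, hxp⟩
      exact ⟨q, ⟨by rintro rfl; exact hxp hxq, hq⟩, hxq⟩
  sum_red := by rw [← h.sum_red, ← sum_erase_add P _ hp, Nat.add_sub_cancel]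

theorem notMem_of_nonempty {S : Finset α} {a : ℕ} (h : IsBicoloredPartition k r (C \ S) P)
    (hS : S.Nonempty) : (S, a) ∉ P := fun hmem => by
  obtain ⟨x, hx⟩ := hS
  exact (mem_sdiff.1 (h.subset hmem hx)).2 hx

theorem insert {S : Finset α} {a : ℕ} (h : IsBicoloredPartition k r (C \ S) P) (hSC : S ⊆ C)
    (ha : 1 ≤ a) (haS : a < S.card) :
    IsBicoloredPartition (a + k) (r + 1) C (insert (S, a) P) := by
  have hnot : (S, a) ∉ P := h.notMem_of_nonempty (card_pos.1 (by omega))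
  refine ⟨?_, ?_, ?_, ?_, ?_, ?_⟩
  · rw [card_insert_of_notMem hnot, h.card_eq]
  · simpa [ha] using h.one_le_red
  · simpa [haS] using h.red_lt_card
  · rw [coe_insert]
    refine h.pairwiseDisjoint.insert fun q hq _ => ?_
    exact disjoint_sdiff.mono_right (h.subset hq)
  · rw [sup_insert, h.sup_eq]
    exact union_sdiff_of_subset hSC
  · rw [sum_insert hnot, h.sum_red]

end IsBicoloredPartition

noncomputable def bicoloredPartitions (k r : ℕ) (C : Finset α) : Finset (Finset (Finset α × ℕ)) :=
  by classical exact ((C.powerset ×ˢ range C.card).powerset).filter (IsBicoloredPartition k r C)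

theorem mem_bicoloredPartitions {k r : ℕ} {C : Finset α} {P : Finset (Finset α × ℕ)} :
    P ∈ bicoloredPartitions k r C ↔ IsBicoloredPartition k r C P := by
  classical
  refine ⟨fun h => (mem_filter.1 h).2, fun h => mem_filter.2 ⟨mem_powerset.2 fun p hp => ?_, h⟩⟩
  have hsub := h.subset hp
  exact mem_product.2 ⟨mem_powerset.2 hsub,
    mem_range.2 ((h.red_lt_card p hp).trans_le (card_le_card hsub))⟩

theorem Nfund_eq_card_bicoloredPartitions (k l r : ℕ) :
    Nfund k l r = (bicoloredPartitions k r (univ : Finset (Fin (k + l)))).card := by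
  rw [Nfund, ← Nat.card_eq_finsetCard]
  refine Nat.card_congr (Equiv.subtypeEquivRight fun P => ?_)
  rw [mem_bicoloredPartitions]
  exact ⟨fun ⟨h1, h2, h3, h4, h5⟩ => ⟨h1, fun p hp => (h2 p hp).1, fun p hp => (h2 p hp).2,
      h3, h4, h5⟩,
    fun ⟨h1, h2, h3, h4, h5, h6⟩ => ⟨h1, fun p hp => ⟨h2 p hp, h3 p hp⟩, h4, h5, h6⟩⟩

theorem isBicoloredPartition_map_iff (e : β ↪ α) {k r : ℕ} {D : Finset β}
    {P : Finset (Finset β × ℕ)} :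
    IsBicoloredPartition k r (D.map e) (P.map (mapBlocks e)) ↔ IsBicoloredPartition k r D P := by
  have hsup : (P.map (mapBlocks e)).sup Prod.fst = (P.sup Prod.fst).map e := by
    ext x
    simp only [sup_map, mem_sup, Function.comp_apply, mapBlocks_apply, mem_map]
    constructor
    · rintro ⟨p, hp, y, hy, rfl⟩
      exact ⟨y, ⟨p, hp, hy⟩, rfl⟩
    · rintro ⟨y, ⟨p, hp, hy⟩, rfl⟩
      exact ⟨p, hp, y, hy, rfl⟩
  have hdisj : ((P.map (mapBlocks e) : Finset _) : Set (Finset α × ℕ)).PairwiseDisjoint Prod.fst ↔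
      (P : Set (Finset β × ℕ)).PairwiseDisjoint Prod.fst := by
    rw [coe_map, Set.PairwiseDisjoint, (mapBlocks e).injective.injOn.pairwise_image]
    unfold Function.onFun
    simp only [mapBlocks_apply, disjoint_map]
    rfl
  constructor
  · rintro ⟨h1, h2, h3, h4, h5, h6⟩
    simp only [forall_mem_map, mapBlocks_apply, card_map, sum_map] at h1 h2 h3 h6
    exact ⟨h1, h2, h3, hdisj.1 h4, map_injective e (hsup ▸ h5), h6⟩
  · rintro ⟨h1, h2, h3, h4, h5, h6⟩
    refine ⟨by rwa [card_map], ?_, ?_, hdisj.2 h4, by rw [hsup, h5], by rwa [sum_map]⟩ <;>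
      simpa only [forall_mem_map, mapBlocks_apply, card_map]

theorem bicoloredPartitions_map (e : β ↪ α) (k r : ℕ) (D : Finset β) :
    bicoloredPartitions k r (D.map e) =
      (bicoloredPartitions k r D).map (mapEmbedding (mapBlocks e)).toEmbedding := by
  ext Q
  simp only [mem_map, mem_bicoloredPartitions, RelEmbedding.coe_toEmbedding, mapEmbedding_apply]
  constructor
  · intro hQ
    -- every block of `Q` lies in the range of `e`, so `Q` is the image of its pullback
    have hpull : (Q.image fun q => (q.1.preimage e e.injective.injOn, q.2)).map (mapBlocks e) = Q := by
      rw [map_eq_image, image_image]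
      refine (image_congr fun q hq => ?_).trans image_id
      obtain ⟨u, -, hu⟩ := subset_map_iff.1 (hQ.subset hq)
      simp only [Function.comp_apply, id, mapBlocks_apply]
      rw [hu, preimage_map, ← hu]
    refine ⟨_, ?_, hpull⟩
    rwa [← isBicoloredPartition_map_iff e, hpull]
  · rintro ⟨P, hP, rfl⟩
    exact (isBicoloredPartition_map_iff e).2 hP

theorem card_bicoloredPartitions {k l r : ℕ} {C : Finset α} (hC : C.card = k + l) :
    (bicoloredPartitions k r C).card = Nfund k l r := by
  have hcard : Fintype.card C = k + l := by rw [Fintype.card_coe, hC]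
  set e : Fin (k + l) ↪ α := (Fintype.equivFinOfCardEq hcard).symm.toEmbedding.trans
    (Function.Embedding.subtype _)
  have hC' : (univ : Finset (Fin (k + l))).map e = C := by
    rw [← map_map, univ_map_equiv_to_embedding, univ_eq_attach, attach_map_val]
  rw [Nfund_eq_card_bicoloredPartitions, ← hC', bicoloredPartitions_map, card_map]

theorem card_filter_blockType_eq {k r a b : ℕ} {C : Finset α} (ha : 1 ≤ a) (hak : a ≤ k)
    (hb : 1 ≤ b) :
    #{x ∈ (bicoloredPartitions k (r + 1) C).sigma (fun X => X) | blockType x.2 = (a, b)} =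
      #((C.powersetCard (a + b)).sigma fun S => bicoloredPartitions (k - a) r (C \ S)) := by
  symm
  refine card_nbij' (fun x => ⟨insert (x.1, a) x.2, (x.1, a)⟩) (fun y => ⟨y.2.1, y.1.erase y.2⟩)
    ?_ ?_ ?_ ?_
  · rintro ⟨S, Q⟩ hx
    simp only [mem_coe, mem_sigma, mem_powersetCard, mem_bicoloredPartitions] at hx
    obtain ⟨⟨hSC, hS⟩, hQ⟩ := hx
    have hins := hQ.insert hSC ha (by omega)
    rw [Nat.add_sub_cancel' hak] at hins
    rw [mem_coe, mem_filter, mem_sigma, mem_bicoloredPartitions]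
    exact ⟨⟨hins, mem_insert_self _ _⟩, by rw [blockType, hS, Nat.add_sub_cancel_left]⟩
  · rintro ⟨X, p⟩ hy
    rw [mem_coe, mem_filter, mem_sigma, mem_bicoloredPartitions, blockType, Prod.mk.injEq] at hy
    dsimp only at hy ⊢
    obtain ⟨⟨hX, hp⟩, rfl, hb'⟩ := hy
    have hlt := hX.red_lt_card p hp
    simp only [mem_coe, mem_sigma, mem_powersetCard, mem_bicoloredPartitions]
    exact ⟨⟨hX.subset hp, by omega⟩, hX.erase hp⟩
  · rintro ⟨S, Q⟩ hx
    simp only [mem_coe, mem_sigma, mem_powersetCard, mem_bicoloredPartitions] at hx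
    obtain ⟨⟨-, hS⟩, hQ⟩ := hx
    have hnot := hQ.notMem_of_nonempty (a := a) (card_pos.1 (by omega))
    exact Sigma.ext rfl (heq_of_eq (erase_insert hnot))
  · rintro ⟨X, p⟩ hy
    rw [mem_coe, mem_filter, mem_sigma, mem_bicoloredPartitions, blockType, Prod.mk.injEq] at hy
    dsimp only at hy ⊢
    obtain ⟨⟨-, hp⟩, rfl, -⟩ := hy
    exact Sigma.ext (insert_erase hp) (heq_of_eq rfl)

theorem sum_sum_blockType {k l r : ℕ} {C : Finset α} (hC : C.card = k + l) (g : ℕ × ℕ → ℕ) :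
    ∑ X ∈ bicoloredPartitions k (r + 1) C, ∑ p ∈ X, g (blockType p) =
      ∑ a ∈ Icc 1 k, ∑ b ∈ Icc 1 l, g (a, b) * (k + l).choose (a + b) * Nfund (k - a) (l - b) r := by
  have hmaps : ∀ x ∈ (bicoloredPartitions k (r + 1) C).sigma (fun X => X),
      blockType x.2 ∈ Icc 1 k ×ˢ Icc 1 l := by
    intro x hx
    obtain ⟨hX, hp⟩ := mem_sigma.1 hx
    rw [mem_bicoloredPartitions] at hX
    have := hX.red_lt_card _ hp
    have := hX.card_sub_red_le hp
    simp only [blockType, mem_product, mem_Icc]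
    exact ⟨⟨hX.one_le_red _ hp, hX.red_le hp⟩, by omega, by omega⟩
  rw [sum_sigma', ← sum_fiberwise_of_maps_to hmaps, sum_product]
  refine sum_congr rfl fun a ha => sum_congr rfl fun b hb => ?_
  rw [mem_Icc] at ha hb
  rw [sum_congr rfl fun x hx => by rw [(mem_filter.1 hx).2], sum_const, smul_eq_mul,
    card_filter_blockType_eq ha.1 ha.2 hb.1, card_sigma,
    sum_congr rfl fun S hS => card_bicoloredPartitions (k := k - a) (l := l - b) (r := r) ?_,
    sum_const, smul_eq_mul, card_powersetCard, hC, Nat.mul_comm, Nat.mul_assoc]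
  rw [card_sdiff_of_subset (mem_powersetCard.1 hS).1, (mem_powersetCard.1 hS).2, hC]
  omega

end BicoloredPartition

theorem sum_Icc_one_eq_sum_range {M : Type*} [AddCommMonoid M] (f : ℕ → M) (n : ℕ) :
    ∑ a ∈ Icc 1 n, f a = ∑ i ∈ range n, f (i + 1) := by
  rw [range_eq_Ico, sum_Ico_add', zero_add, Ico_add_one_right_eq_Icc]

theorem mul_Nfund_succ_eq_sum (k l r c : ℕ) (g : ℕ × ℕ → ℕ)
    (hg : ∀ X ∈ bicoloredPartitions k (r + 1) (univ : Finset (Fin (k + l))),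
      ∑ p ∈ X, g (blockType p) = c) :
    c * Nfund k l (r + 1) = ∑ i ∈ range k, ∑ j ∈ range l,
      g (i + 1, j + 1) * (k + l).choose (i + j + 2) * Nfund (k - (i + 1)) (l - (j + 1)) r := by
  rw [Nfund_eq_card_bicoloredPartitions, mul_comm, ← smul_eq_mul, ← sum_const, ← sum_congr rfl hg,
    sum_sum_blockType (card_fin _), sum_Icc_one_eq_sum_range]
  refine sum_congr rfl fun i _ => ?_
  rw [sum_Icc_one_eq_sum_range]
  refine sum_congr rfl fun j _ => ?_
  rw [show i + 1 + (j + 1) = i + j + 2 by ring]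

theorem succ_mul_Nfund_succ_eq_sum (k l r : ℕ) :
    (r + 1) * Nfund k l (r + 1) = ∑ i ∈ range k, ∑ j ∈ range l,
      (k + l).choose (i + j + 2) * Nfund (k - (i + 1)) (l - (j + 1)) r := by
  simpa using mul_Nfund_succ_eq_sum k l r (r + 1) (fun _ => 1)
    fun _ hX => by simpa using (mem_bicoloredPartitions.1 hX).card_eq

theorem mul_Nfund_succ_eq_sum_red (k l r : ℕ) :
    k * Nfund k l (r + 1) = ∑ i ∈ range k, ∑ j ∈ range l,
      (i + 1) * (k + l).choose (i + j + 2) * Nfund (k - (i + 1)) (l - (j + 1)) r :=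
  mul_Nfund_succ_eq_sum k l r k Prod.fst fun _ hX => (mem_bicoloredPartitions.1 hX).sum_red

theorem mul_Nfund_succ_eq_sum_blue (k l r : ℕ) :
    l * Nfund k l (r + 1) = ∑ i ∈ range k, ∑ j ∈ range l,
      (j + 1) * (k + l).choose (i + j + 2) * Nfund (k - (i + 1)) (l - (j + 1)) r := by
  refine mul_Nfund_succ_eq_sum k l r l Prod.snd fun X hX => ?_
  have hX := mem_bicoloredPartitions.1 hX
  change ∑ p ∈ X, (p.1.card - p.2) = l
  rw [sum_tsub_distrib _ fun p hp => (hX.red_lt_card p hp).le, hX.sum_card, hX.sum_red,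
    card_univ, Fintype.card_fin, Nat.add_sub_cancel_left]

theorem Nfund_succ_eq_sum (k l r : ℕ) :
    Nfund (k + 1) (l + 1) (r + 1) = ∑ i ∈ range (k + 1), ∑ j ∈ range (l + 1),
      (k + l + 1).choose (i + j + 1) * Nfund (k - i) (l - j) r := by
  refine Nat.eq_of_mul_eq_mul_left (show 0 < k + l + 2 by omega) ?_
  rw [show k + l + 2 = (k + 1) + (l + 1) by ring, add_mul, mul_Nfund_succ_eq_sum_red,
    mul_Nfund_succ_eq_sum_blue, ← sum_add_distrib, mul_sum]
  refine sum_congr rfl fun i _ => ?_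
  rw [← sum_add_distrib, mul_sum]
  refine sum_congr rfl fun j _ => ?_
  rw [show k + 1 + (l + 1) = k + l + 1 + 1 by ring, ← mul_assoc,
    Nat.add_one_mul_choose_eq, Nat.add_sub_add_right, Nat.add_sub_add_right]
  ring

-- The recurrence at `k + 1, l + 1, r + 1`, with each term on the side where its sign is `+`.
theorem Nfund_succ_add_eq (k l r : ℕ) :
    Nfund (k + 1) (l + 1) (r + 1) + (k + l + 1) * ((r + 1) * Nfund k l (r + 1)) =
      (k + 1) * Nfund (k + 1) l (r + 1) + (l + 1) * Nfund k (l + 1) (r + 1) +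
        (k + l + 1) * Nfund k l r := by
  set T : ℕ → ℕ → ℕ := fun i j => Nfund (k - (i + 1)) (l - (j + 1)) r with hT
  set top := ∑ j ∈ range l, (k + l + 1).choose (j + 2) * Nfund k (l - (j + 1)) r
  set left := ∑ i ∈ range k, (k + l + 1).choose (i + 2) * Nfund (k - (i + 1)) l r
  have e0 : Nfund (k + 1) (l + 1) (r + 1) = (k + l + 1) * Nfund k l r + top + left +
      ∑ i ∈ range k, ∑ j ∈ range l, (k + l + 1).choose (i + j + 3) * T i j := by
    rw [Nfund_succ_eq_sum]
    simp only [sum_range_succ', Nat.sub_zero, sum_add_distrib, zero_add, Nat.choose_one_right, hT,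
      top, left]
    ring_nf
  have e1 : (k + 1) * Nfund (k + 1) l (r + 1) = top +
      ∑ i ∈ range k, ∑ j ∈ range l, (i + 2) * (k + l + 1).choose (i + j + 3) * T i j := by
    rw [mul_Nfund_succ_eq_sum_red]
    simp only [sum_range_succ', Nat.add_sub_add_right, Nat.sub_zero, hT, top]
    ring_nf
  have e2 : (l + 1) * Nfund k (l + 1) (r + 1) = left +
      ∑ i ∈ range k, ∑ j ∈ range l, (j + 2) * (k + l + 1).choose (i + j + 3) * T i j := by
    rw [mul_Nfund_succ_eq_sum_blue]
    simp only [sum_range_succ', Nat.add_sub_add_right, Nat.sub_zero, sum_add_distrib, hT, left]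
    ring_nf
  have core : ∑ i ∈ range k, ∑ j ∈ range l, (k + l + 1).choose (i + j + 3) * T i j +
      (k + l + 1) * ∑ i ∈ range k, ∑ j ∈ range l, (k + l).choose (i + j + 2) * T i j =
      ∑ i ∈ range k, ∑ j ∈ range l, (i + 2) * (k + l + 1).choose (i + j + 3) * T i j +
      ∑ i ∈ range k, ∑ j ∈ range l, (j + 2) * (k + l + 1).choose (i + j + 3) * T i j := by
    simp only [mul_sum, ← sum_add_distrib]
    refine sum_congr rfl fun i _ => sum_congr rfl fun j _ => ?_
    rw [← mul_assoc, Nat.add_one_mul_choose_eq]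
    ring
  rw [e0, e1, e2, succ_mul_Nfund_succ_eq_sum]
  linarith

/-- Eulerian-type recurrence for the fundamental multinomials:
`N^{[r]}_{k,l} = k N^{[r]}_{k,l-1} + l N^{[r]}_{k-1,l}
  + (k+l-1)(N^{[r-1]}_{k-1,l-1} - r N^{[r]}_{k-1,l-1})`. -/
theorem Nfund_recurrence (k l r : ℕ) (hk : 1 ≤ k) (hl : 1 ≤ l) (hr : 1 ≤ r) :
    (Nfund k l r : ℤ) =
      (k : ℤ) * Nfund k (l - 1) r + (l : ℤ) * Nfund (k - 1) l r +
      ((k : ℤ) + l - 1) *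
        ((Nfund (k - 1) (l - 1) (r - 1) : ℤ) - (r : ℤ) * Nfund (k - 1) (l - 1) r) := by
  obtain ⟨k, rfl⟩ := Nat.exists_eq_add_one.2 hk
  obtain ⟨l, rfl⟩ := Nat.exists_eq_add_one.2 hl
  obtain ⟨r, rfl⟩ := Nat.exists_eq_add_one.2 hr
  have key := congrArg (Nat.cast : ℕ → ℤ) (Nfund_succ_add_eq k l r)
  push_cast at key
  simp only [Nat.add_sub_cancel]
  push_cast
  linear_combination key
end

section
/- For a nonpositive shift s ≤ 0, the shifted multinomial satisfies N^{(s)}_{k,l} = Σ C(n_1+...+n_r−1, n_1−1)·C(n_2+...+n_r−1, n_2−1)···C(n_{−s−1}+...+n_r−1, n_{−s−1}−1)·multinomial(n_{−s}+...+n_r−1; n_{−s}−1, n_{−s+1}, ..., n_r), summed over ordered compositions (k,l)=(k_1,l_1)+...+(k_r,l_r) with r ≥ −s, all k_i,l_i ≥ 1, and n_i = k_i+l_i. -/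
/-- The summand attached to an ordered composition with part sizes `n 0, …, n (r-1)` and
`t = -s` leading binomial shifts: the product
`C(n₁+…+n_r-1, n₁-1) ⋯ C(n_{t-1}+…+n_r-1, n_{t-1}-1) ·
  multinomial(n_t+…+n_r-1; n_t-1, n_{t+1}, …, n_r)`
(1-indexed as in the paper; for `t = 0` it is the plain multinomial
`multinomial(n₁+…+n_r; n₁, …, n_r)`). -/
def compTerm (r : ℕ) (n : ℕ → ℕ) (t : ℕ) : ℕ :=
  if t = 0 then
    (∑ j ∈ Finset.range r, n j).factorial / ∏ j ∈ Finset.range r, (n j).factorial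
  else
    (∏ i ∈ Finset.range (t - 1),
        Nat.choose ((∑ j ∈ Finset.Ico i r, n j) - 1) (n i - 1)) *
      (((∑ j ∈ Finset.Ico (t - 1) r, n j) - 1).factorial /
        ((n (t - 1) - 1).factorial * ∏ j ∈ Finset.Ico t r, (n j).factorial))

open Finset
open Function
open scoped Nat

namespace Nat

variable {ι : Type*} {s : Finset ι} {f : ι → ℕ}

theorem choose_mul_multinomial_erase [DecidableEq ι] {a : ι} (ha : a ∈ s) :
    (∑ i ∈ s, f i).choose (f a) * multinomial (s.erase a) f = multinomial s f := by
  rw [← insert_erase ha, multinomial_insert (notMem_erase a s), sum_insert (notMem_erase a s),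
    erase_insert_eq_erase, erase_idem]

theorem multinomial_eq_sum_choose_pred_mul [DecidableEq ι] (hs : s.Nonempty)
    (hf : ∀ i ∈ s, 0 < f i) :
    multinomial s f =
      ∑ a ∈ s, (∑ i ∈ s, f i - 1).choose (f a - 1) * multinomial (s.erase a) f := by
  set N := ∑ i ∈ s, f i
  obtain ⟨b, hb⟩ := hs
  have hN : 0 < N := (hf b hb).trans_le (single_le_sum (fun i _ => Nat.zero_le _) hb)
  refine Nat.eq_of_mul_eq_mul_left hN ?_
  have key : ∀ a ∈ s, N * (N - 1).choose (f a - 1) = f a * N.choose (f a) := by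
    intro a ha
    have := Nat.add_one_mul_choose_eq (N - 1) (f a - 1)
    rwa [Nat.sub_add_cancel hN, Nat.sub_add_cancel (hf a ha), mul_comm (N.choose _)] at this
  calc N * multinomial s f = ∑ a ∈ s, f a * multinomial s f := by rw [← sum_mul]
    _ = ∑ a ∈ s, N * ((N - 1).choose (f a - 1) * multinomial (s.erase a) f) := by
      refine sum_congr rfl fun a ha => ?_
      rw [← mul_assoc, key a ha, mul_assoc, choose_mul_multinomial_erase ha]
    _ = _ := by rw [mul_sum]

theorem factorial_div_eq_choose_mul_multinomial (a : ℕ) :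
    (a + ∑ i ∈ s, f i)! / (a ! * ∏ i ∈ s, (f i)!) =
      (a + ∑ i ∈ s, f i).choose a * multinomial s f := by
  refine Nat.div_eq_of_eq_mul_left (by positivity) ?_
  rw [← Nat.add_choose_mul_factorial_mul_factorial, ← multinomial_spec s f, choose_symm_add]
  ring

theorem multinomial_comp_equiv {ι κ : Type*} {s : Finset ι} {t : Finset κ} (e : ι ≃ κ)
    (h : ∀ i, i ∈ s ↔ e i ∈ t) (f : κ → ℕ) :
    multinomial s (f ∘ e) = multinomial t f := by
  simp only [multinomial, comp_def]
  rw [sum_equiv e h (g := f) (fun _ _ => rfl),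
    prod_equiv e h (g := fun i => (f i)!) (fun _ _ => rfl)]

theorem multinomial_univ_fin_succ {r : ℕ} (n : Fin (r + 1) → ℕ) :
    multinomial univ n = (∑ i, n i).choose (n 0) * multinomial univ (Fin.tail n) := by
  rw [Fin.univ_succ, multinomial_cons, sum_cons]
  simp [multinomial, Fin.tail]

end Nat

-- `T_t` of the header, with parts indexed from `0`.
def compTerm' (r : ℕ) (n : ℕ → ℕ) (t : ℕ) : ℕ :=
  (∏ i ∈ range t, (∑ j ∈ Ico i r, n j - 1).choose (n i - 1)) * Nat.multinomial (Ico t r) n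

theorem compTerm_eq_compTerm' {r t : ℕ} {n : ℕ → ℕ} (hn : ∀ i < r, 0 < n i) (ht : t ≤ r) :
    compTerm r n t = compTerm' r n t := by
  rcases t with _ | t
  · rw [compTerm, if_pos rfl, compTerm', prod_range_zero, one_mul, Nat.multinomial, range_eq_Ico]
  · have hsplit : ∑ j ∈ Ico t r, n j - 1 = (n t - 1) + ∑ j ∈ Ico (t + 1) r, n j := by
      rw [sum_eq_sum_Ico_succ_bot ht]
      have := hn t ht
      omega
    simp only [compTerm, compTerm', Nat.succ_ne_zero, if_false, Nat.add_sub_cancel, hsplit,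
      Nat.factorial_div_eq_choose_mul_multinomial, prod_range_succ, mul_assoc]

def zeroExtend {r : ℕ} (m : Fin r → ℕ) (i : ℕ) : ℕ :=
  if h : i < r then m ⟨i, h⟩ else 0

theorem zeroExtend_comp_swap {r : ℕ} (m : Fin r → ℕ) (a b : Fin r) :
    zeroExtend (m ∘ Equiv.swap a b) = zeroExtend m ∘ Equiv.swap (a : ℕ) b := by
  funext i
  simp only [zeroExtend, comp_apply, Equiv.swap_apply_def, Fin.ext_iff]
  split_ifs <;> first | rfl | omega

theorem compTerm'_zero_zeroExtend {r : ℕ} (m : Fin r → ℕ) :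
    compTerm' r (zeroExtend m) 0 = Nat.multinomial univ m := by
  simp only [compTerm', range_zero, prod_empty, one_mul, ← range_eq_Ico, Nat.multinomial,
    ← Fin.sum_univ_eq_sum_range, ← Fin.prod_univ_eq_prod_range, zeroExtend, Fin.is_lt, dif_pos]

def compTermSummand (r : ℕ) (n : ℕ → ℕ) (t a : ℕ) : ℕ :=
  (∏ i ∈ range t, (∑ j ∈ Ico i r, n j - 1).choose (n i - 1)) *
    ((∑ j ∈ Ico t r, n j - 1).choose (n a - 1) * Nat.multinomial ((Ico t r).erase a) n)

theorem compTerm'_eq_sum_compTermSummand {r t : ℕ} {n : ℕ → ℕ} (ht : t < r)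
    (hn : ∀ i ∈ Ico t r, 0 < n i) :
    compTerm' r n t = ∑ a ∈ Ico t r, compTermSummand r n t a := by
  rw [compTerm', Nat.multinomial_eq_sum_choose_pred_mul ⟨t, by simpa using ht⟩ hn, mul_sum]
  rfl

theorem compTermSummand_comp_swap (n : ℕ → ℕ) {r t a : ℕ} (hta : t ≤ a) (har : a < r) :
    compTermSummand r (n ∘ Equiv.swap t a) t a = compTerm' r n (t + 1) := by
  have hsum : ∀ i ≤ t, ∑ j ∈ Ico i r, (n ∘ Equiv.swap t a) j = ∑ j ∈ Ico i r, n j :=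
    fun i hi => sum_equiv (Equiv.swap t a) (fun j => by
      simp only [mem_Ico, Equiv.swap_apply_def]; split_ifs <;> omega) (fun _ _ => rfl)
  have hfix : ∀ i ∈ range t, (n ∘ Equiv.swap t a) i = n i := fun i hi => by
    rw [mem_range] at hi
    rw [comp_apply, Equiv.swap_apply_of_ne_of_ne (by omega) (by omega)]
  have hmult : Nat.multinomial ((Ico t r).erase a) (n ∘ Equiv.swap t a) =
      Nat.multinomial (Ico (t + 1) r) n :=
    Nat.multinomial_comp_equiv _ (fun j => by
      simp only [mem_erase, mem_Ico, Equiv.swap_apply_def]; split_ifs <;> omega) n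
  rw [compTermSummand, compTerm', prod_range_succ, hmult, hsum t le_rfl, comp_apply,
    Equiv.swap_apply_right, mul_assoc]
  congr 1
  exact prod_congr rfl fun i hi => by
    rw [hsum i (mem_range.1 hi).le, hfix i hi]

section Symmetrization

variable {γ : Type*} {r : ℕ} {F : Finset (Fin r → γ)} {w : γ → ℕ}

theorem sum_compTerm'_eq_mul_sum_succ (hF : ∀ σ : Equiv.Perm (Fin r), ∀ f ∈ F, f ∘ σ ∈ F)
    (hw : ∀ f ∈ F, ∀ i, 0 < w (f i)) {t : ℕ} (ht : t < r) :
    ∑ f ∈ F, compTerm' r (zeroExtend (w ∘ f)) t =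
      (r - t) * ∑ f ∈ F, compTerm' r (zeroExtend (w ∘ f)) (t + 1) := by
  have hpos (f) (hf : f ∈ F) (i) (hi : i ∈ Ico t r) : 0 < zeroExtend (w ∘ f) i := by
    rw [zeroExtend, dif_pos (mem_Ico.1 hi).2]
    exact hw f hf _
  have hswap : ∀ a ∈ Ico t r, ∑ f ∈ F, compTerm' r (zeroExtend (w ∘ f)) (t + 1) =
      ∑ f ∈ F, compTermSummand r (zeroExtend (w ∘ f)) t a := by
    intro a ha
    obtain ⟨hta, har⟩ := mem_Ico.1 ha
    let σ := Equiv.swap (⟨t, ht⟩ : Fin r) ⟨a, har⟩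
    refine sum_nbij' (· ∘ σ) (· ∘ σ) (fun f hf => hF σ f hf) (fun f hf => hF σ f hf)
      (fun f _ => by ext; simp [σ]) (fun f _ => by ext; simp [σ]) fun f _ => ?_
    rw [← comp_assoc, zeroExtend_comp_swap]
    exact (compTermSummand_comp_swap _ hta har).symm
  rw [sum_congr rfl fun f hf => compTerm'_eq_sum_compTermSummand ht (hpos f hf), sum_comm,
    ← sum_congr rfl hswap, sum_const, Nat.card_Ico, smul_eq_mul]

theorem sum_multinomial_eq_descFactorial_mul (hF : ∀ σ : Equiv.Perm (Fin r), ∀ f ∈ F, f ∘ σ ∈ F)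
    (hw : ∀ f ∈ F, ∀ i, 0 < w (f i)) {t : ℕ} (ht : t ≤ r) :
    ∑ f ∈ F, Nat.multinomial univ (w ∘ f) =
      r.descFactorial t * ∑ f ∈ F, compTerm' r (zeroExtend (w ∘ f)) t := by
  induction t with
  | zero => simp [compTerm'_zero_zeroExtend]
  | succ t ih =>
    rw [ih (by omega), sum_compTerm'_eq_mul_sum_succ hF hw ht, Nat.descFactorial_succ]
    ring

end Symmetrization

theorem card_embedding_map_eq_mul_factorial {β : Type*} (p : Finset β → Prop) (r : ℕ)
    [Finite {s : Finset β // #s = r ∧ p s}] :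
    Nat.card {g : Fin r ↪ β // p (univ.map g)} =
      Nat.card {s : Finset β // #s = r ∧ p s} * r ! := by
  classical
  let Φ : {g : Fin r ↪ β // p (univ.map g)} → {s : Finset β // #s = r ∧ p s} :=
    fun g => ⟨univ.map g.1, by simp, g.2⟩
  have map_eq (s : Finset β) (e : Fin r ≃ s) :
      univ.map (e.toEmbedding.trans (Embedding.subtype _)) = s := by
    ext x
    simpa using ⟨fun ⟨a, ha⟩ => ha ▸ (e a).2, fun hx => ⟨e.symm ⟨x, hx⟩, by simp⟩⟩
  have fiber (s : {s : Finset β // #s = r ∧ p s}) : {g // Φ g = s} ≃ (Fin r ≃ s) :=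
    { toFun := fun g => Equiv.ofBijective
        (fun i => ⟨g.1.1 i, by rw [← show univ.map g.1.1 = s from congrArg Subtype.val g.2]; simp⟩)
        ((Fintype.bijective_iff_injective_and_card _).2
          ⟨fun i j h => g.1.1.injective (congrArg Subtype.val h), by simp [s.2.1]⟩)
      invFun := fun e => ⟨⟨_, (map_eq s e).symm ▸ s.2.2⟩, Subtype.ext (map_eq s e)⟩
      left_inv := fun _ => rfl
      right_inv := fun _ => Equiv.ext fun _ => rfl }
  have card_fiber (s : {s : Finset β // #s = r ∧ p s}) : Nat.card {g // Φ g = s} = r ! := by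
    rw [Nat.card_congr (fiber s), Nat.card_eq_fintype_card,
      Fintype.card_equiv (Fintype.equivFinOfCardEq (by simp [s.2.1])).symm, Fintype.card_fin]
  have := Fintype.ofFinite {s : Finset β // #s = r ∧ p s}
  have (s : {s : Finset β // #s = r ∧ p s}) := Finite.of_equiv _ (fiber s).symm
  rw [← Nat.card_congr (Equiv.sigmaFiberEquiv Φ), Nat.card_sigma]
  simp [card_fiber, Nat.card_eq_fintype_card]

section OrderedPartition

variable {α : Type*} [DecidableEq α] {r : ℕ}

theorem sum_card_eq_card_sup {P : Fin r → Finset α} (hP : Pairwise (Disjoint on P)) :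
    ∑ i, #(P i) = #(univ.sup P) := by
  rw [sup_eq_biUnion, card_biUnion (by simpa [Set.PairwiseDisjoint, Set.pairwise_univ] using hP)]

def IsOrderedPartition (S : Finset α) (n : Fin r → ℕ) (P : Fin r → Finset α) : Prop :=
  (∀ i, #(P i) = n i) ∧ Pairwise (Disjoint on P) ∧ univ.sup P = S

theorem isOrderedPartition_cons_iff {S x : Finset α} {n : Fin (r + 1) → ℕ}
    {P : Fin r → Finset α} :
    IsOrderedPartition S n (Fin.cons x P) ↔
      x ∈ S.powersetCard (n 0) ∧ IsOrderedPartition (S \ x) (Fin.tail n) P := by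
  have split : (∀ i, Disjoint x (P i)) ∧ x ∪ univ.sup P = S ↔ x ⊆ S ∧ univ.sup P = S \ x := by
    rw [show (∀ i, Disjoint x (P i)) ↔ Disjoint x (univ.sup P) by simp [Finset.disjoint_sup_right]]
    constructor
    · rintro ⟨hx, rfl⟩
      exact ⟨subset_union_left, (union_sdiff_cancel_left hx).symm⟩
    · rintro ⟨hx, h⟩
      exact ⟨h ▸ disjoint_sdiff, h ▸ union_sdiff_of_subset hx⟩
  simp only [IsOrderedPartition, Fin.forall_fin_succ, pairwise_fin_succ_iff, onFun,
    Fin.cons_zero, Fin.cons_succ, Fin.univ_succ, sup_cons, sup_map, comp_def,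
    Embedding.coeFn_mk, mem_powersetCard, Fin.tail, disjoint_comm (b := x), sup_eq_union]
  tauto

theorem card_isOrderedPartition [Fintype α] (S : Finset α) (n : Fin r → ℕ)
    (hn : ∑ i, n i = #S) :
    Nat.card {P // IsOrderedPartition S n P} = Nat.multinomial univ n := by
  induction r generalizing S with
  | zero =>
    obtain rfl : S = ∅ := by simpa [eq_comm] using hn
    simp [IsOrderedPartition]
  | succ r ih =>
    have fiber (x : Finset α) : Nat.card {P // IsOrderedPartition S n (Fin.cons x P)} =
        if x ∈ S.powersetCard (n 0) then Nat.multinomial univ (Fin.tail n) else 0 := by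
      simp_rw [isOrderedPartition_cons_iff]
      split_ifs with hx
      · simp only [hx, true_and]
        refine ih _ _ ?_
        rw [mem_powersetCard] at hx
        rw [card_sdiff_of_subset hx.1, hx.2, ← hn, Fin.sum_univ_succ]
        simp [Fin.tail]
      · simp [hx]
    let e : {c : Finset α × (Fin r → Finset α) // IsOrderedPartition S n (Fin.cons c.1 c.2)} ≃
        {P // IsOrderedPartition S n P} :=
      (Fin.consEquiv fun _ => Finset α).subtypeEquiv fun _ => Iff.rfl
    rw [← Nat.card_congr e, Nat.card_congr (Equiv.subtypeProdEquivSigmaSubtype fun x P =>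
      IsOrderedPartition S n (Fin.cons x P)), Nat.card_sigma]
    simp only [fiber]
    rw [sum_ite_mem, univ_inter, sum_const, card_powersetCard, smul_eq_mul, ← hn,
      Nat.multinomial_univ_fin_succ]

theorem IsOrderedPartition.injective {S : Finset α} {n : Fin r → ℕ} {P : Fin r → Finset α}
    (hP : IsOrderedPartition S n P) (hn : ∀ i, 0 < n i) : Injective P := by
  intro i j hij
  by_contra hne
  have hdisj : Disjoint (P i) (P j) := hP.2.1 hne
  rw [← hij, disjoint_self_iff_empty] at hdisj
  have := hn i
  rw [← hP.1 i, hdisj, card_empty] at this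
  exact this.false

end OrderedPartition

section Compositions

variable {k l r : ℕ}

def compositions (k l r : ℕ) : Finset (Fin r → Fin (k + 1) × Fin (l + 1)) :=
  univ.filter fun f => (∀ i, 1 ≤ ((f i).1 : ℕ) ∧ 1 ≤ ((f i).2 : ℕ)) ∧
    (∑ i, ((f i).1 : ℕ)) = k ∧ (∑ i, ((f i).2 : ℕ)) = l

def blockSize (x : Fin (k + 1) × Fin (l + 1)) : ℕ := x.1 + x.2

theorem comp_perm_mem_compositions {f : Fin r → Fin (k + 1) × Fin (l + 1)}
    (hf : f ∈ compositions k l r) (σ : Equiv.Perm (Fin r)) : f ∘ σ ∈ compositions k l r := by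
  simp only [compositions, mem_filter, mem_univ, true_and, comp_apply] at hf ⊢
  exact ⟨fun i => hf.1 (σ i), (Equiv.sum_comp σ fun i => ((f i).1 : ℕ)).trans hf.2.1,
    (Equiv.sum_comp σ fun i => ((f i).2 : ℕ)).trans hf.2.2⟩

theorem sum_blockSize {f : Fin r → Fin (k + 1) × Fin (l + 1)} (hf : f ∈ compositions k l r) :
    ∑ i, blockSize (f i) = k + l := by
  simp only [compositions, mem_filter] at hf
  simp only [blockSize, sum_add_distrib, hf.2.2]

theorem blockSize_pos {f : Fin r → Fin (k + 1) × Fin (l + 1)} (hf : f ∈ compositions k l r)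
    (i : Fin r) : 0 < blockSize (f i) := by
  have := ((mem_filter.1 hf).2.1 i).1
  simp only [blockSize]
  omega

theorem compositions_zero (hk : k ≠ 0) : compositions k l 0 = ∅ := by
  ext f
  simp [compositions, Ne.symm hk]

end Compositions

section Bicolored

variable {k l r : ℕ}

def IsBicoloredPartition_s16 (k l : ℕ) (P : Finset (Finset (Fin (k + l)) × ℕ)) : Prop :=
  (∀ p ∈ P, 1 ≤ p.2 ∧ p.2 < p.1.card) ∧
    (P : Set (Finset (Fin (k + l)) × ℕ)).Pairwise (fun p q => Disjoint p.1 q.1) ∧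
    P.sup Prod.fst = univ ∧ ∑ p ∈ P, p.2 = k

theorem Nfund_eq_card : Nfund k l r = Nat.card {P // #P = r ∧ IsBicoloredPartition_s16 k l P} := rfl

instance : Finite {P // #P = r ∧ IsBicoloredPartition_s16 k l P} := by
  refine Set.Finite.to_subtype (Set.Finite.subset (univ ×ˢ range (k + l + 1)).powerset.finite_toSet
    fun P hP => ?_)
  simp only [coe_powerset, Set.mem_preimage, Set.mem_powerset_iff, coe_subset]
  intro p hp
  have := (hP.2.1 p hp).2
  have := card_le_univ p.1
  simp only [Fintype.card_fin] at this
  simp only [mem_product, mem_univ, mem_range, true_and]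
  omega

theorem isBicoloredPartition_map_iff_s16 (g : Fin r ↪ Finset (Fin (k + l)) × ℕ) :
    IsBicoloredPartition_s16 k l (univ.map g) ↔
      (∀ i, 1 ≤ (g i).2 ∧ (g i).2 < #(g i).1) ∧
        IsOrderedPartition univ (fun i => #(g i).1) (fun i => (g i).1) ∧ ∑ i, (g i).2 = k := by
  simp only [IsBicoloredPartition_s16, IsOrderedPartition, forall_mem_map, mem_univ, forall_const,
    coe_map, coe_univ, (g.injective.injOn).pairwise_image, Set.pairwise_univ, sup_map, sum_map,
    implies_true, true_and, and_assoc]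
  rfl

theorem sum_card_sub_eq_of_isBicoloredPartition {g : Fin r ↪ Finset (Fin (k + l)) × ℕ}
    (hg : IsBicoloredPartition_s16 k l (univ.map g)) : ∑ i, (#(g i).1 - (g i).2) = l := by
  obtain ⟨hcol, ⟨-, hdisj, hcover⟩, hk⟩ := (isBicoloredPartition_map_iff_s16 g).1 hg
  rw [sum_tsub_distrib _ fun i _ => (hcol i).2.le, sum_card_eq_card_sup hdisj, hcover, card_univ,
    Fintype.card_fin, hk, Nat.add_sub_cancel_left]

def bicoloredEquiv :
    {g : Fin r ↪ Finset (Fin (k + l)) × ℕ // IsBicoloredPartition_s16 k l (univ.map g)} ≃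
      {c : compositions k l r × (Fin r → Finset (Fin (k + l))) //
        IsOrderedPartition univ (blockSize ∘ c.1.1) c.2} where
  toFun g :=
    have hg := (isBicoloredPartition_map_iff_s16 g.1).1 g.2
    have hl := sum_card_sub_eq_of_isBicoloredPartition g.2
    ⟨(⟨fun i => (⟨(g.1 i).2, Nat.lt_succ_of_le <|
          (single_le_sum (fun _ _ => Nat.zero_le _) (mem_univ i)).trans_eq hg.2.2⟩,
        ⟨#(g.1 i).1 - (g.1 i).2, Nat.lt_succ_of_le <|
          (single_le_sum (fun _ _ => Nat.zero_le _) (mem_univ i)).trans_eq hl⟩),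
      by
        simp only [compositions, mem_filter, mem_univ, true_and]
        exact ⟨fun i => ⟨(hg.1 i).1, by have := (hg.1 i).2; omega⟩, hg.2.2, hl⟩⟩,
      fun i => (g.1 i).1), by
        refine ⟨fun i => ?_, hg.2.1.2⟩
        simp only [comp_apply, blockSize]
        have := (hg.1 i).2
        omega⟩
  invFun c :=
    have hf := (mem_filter.1 c.1.1.2).2
    have hsize (i : Fin r) : #(c.1.2 i) = (c.1.1.1 i).1 + (c.1.1.1 i).2 := c.2.1 i
    ⟨⟨fun i => (c.1.2 i, (c.1.1.1 i).1), fun i j hij =>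
        c.2.injective (blockSize_pos c.1.1.2) (congrArg Prod.fst hij)⟩,
      (isBicoloredPartition_map_iff_s16 _).2
        ⟨fun i => ⟨(hf.1 i).1, by
          have := hsize i
          have := (hf.1 i).2
          show ((c.1.1.1 i).1 : ℕ) < #(c.1.2 i)
          omega⟩,
          ⟨fun _ => rfl, c.2.2⟩, hf.2.1⟩⟩
  left_inv g := rfl
  right_inv c := by
    refine Subtype.ext (Prod.ext (Subtype.ext (funext fun i => Prod.ext rfl (Fin.ext ?_))) rfl)
    have : #(c.1.2 i) = (c.1.1.1 i).1 + (c.1.1.1 i).2 := c.2.1 i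
    show #(c.1.2 i) - (c.1.1.1 i).1 = (c.1.1.1 i).2
    omega

theorem Nfund_mul_factorial :
    Nfund k l r * r ! = ∑ f ∈ compositions k l r, Nat.multinomial univ (blockSize ∘ f) := by
  rw [Nfund_eq_card, ← card_embedding_map_eq_mul_factorial, Nat.card_congr bicoloredEquiv,
    Nat.card_congr (Equiv.subtypeProdEquivSigmaSubtype fun f P =>
      IsOrderedPartition univ (blockSize ∘ Subtype.val f) P), Nat.card_sigma,
    ← sum_coe_sort (compositions k l r)]
  exact sum_congr rfl fun f _ => card_isOrderedPartition _ _ (by simp [sum_blockSize f.2])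

theorem factorial_sub_mul_Nfund {t : ℕ} (ht : t ≤ r) :
    (r - t)! * Nfund k l r =
      ∑ f ∈ compositions k l r, compTerm r (zeroExtend (blockSize ∘ f)) t := by
  have hsum := sum_multinomial_eq_descFactorial_mul (F := compositions k l r)
    (fun σ f hf => comp_perm_mem_compositions hf σ)
    (fun f hf => blockSize_pos hf) ht
  rw [← Nfund_mul_factorial, ← Nat.factorial_mul_descFactorial ht] at hsum
  rw [sum_congr rfl fun f hf => compTerm_eq_compTerm' (fun i hi => by
    simpa [zeroExtend, hi] using blockSize_pos hf ⟨i, hi⟩) ht]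
  exact Nat.eq_of_mul_eq_mul_right (Nat.descFactorial_pos.2 ht) (by linarith)

end Bicolored

theorem Nshift_neg_natCast (k l t : ℕ) :
    Nshift k l (-t) = ∑ r ∈ (Icc 1 (k + l)).filter (t ≤ ·), (r - t)! * Nfund k l r := by
  rw [Nshift, sum_filter]
  refine sum_congr rfl fun r _ => ?_
  by_cases htr : t ≤ r
  · rw [if_pos (by omega), if_pos htr, show ((r : ℤ) + -t).toNat = r - t by omega]
  · rw [if_neg (by omega), if_neg htr, zero_mul]

theorem Nshift_binomial_decomposition_general (k l : ℕ) (s : ℤ)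
    (hk : 1 ≤ k) (hs : s ≤ 0) :
    Nshift k l s =
      ∑ r ∈ Finset.Icc (-s).toNat (k + l),
        ∑ f ∈ (Finset.univ : Finset (Fin r → Fin (k + 1) × Fin (l + 1))).filter
            (fun f => (∀ i, 1 ≤ ((f i).1 : ℕ) ∧ 1 ≤ ((f i).2 : ℕ)) ∧
              (∑ i, ((f i).1 : ℕ)) = k ∧ (∑ i, ((f i).2 : ℕ)) = l),
          compTerm r
            (fun i => if h : i < r then ((f ⟨i, h⟩).1 : ℕ) + ((f ⟨i, h⟩).2 : ℕ) else 0)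
            (-s).toNat := by
  obtain ⟨t, rfl⟩ : ∃ t : ℕ, s = -t := ⟨(-s).toNat, by omega⟩
  rw [show (-(-(t : ℤ))).toNat = t by omega, Nshift_neg_natCast]
  change _ = ∑ r ∈ Icc t (k + l),
    ∑ f ∈ compositions k l r, compTerm r (zeroExtend (blockSize ∘ f)) t
  rw [sum_congr rfl fun r hr => factorial_sub_mul_Nfund (mem_filter.1 hr).2]
  refine sum_subset (fun r hr => ?_) fun r hr hr' => ?_
  · simp only [mem_filter, mem_Icc] at hr ⊢
    omega
  · obtain rfl : r = 0 := by simp only [mem_filter, mem_Icc] at hr hr'; omega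
    rw [compositions_zero (by omega), sum_empty]

/-- For nonpositive shifts `s ≤ 0`, the shifted multinomial `N^{(s)}_{k,l}` decomposes as
a sum over ordered compositions `(k,l) = (k₁,l₁) + … + (k_r,l_r)` with `r ≥ -s` parts and
all `kᵢ, lᵢ ≥ 1` (encoded as functions `f : Fin r → Fin (k+1) × Fin (l+1)`), of the
product of `-s-1` shifted binomials and a shifted multinomial in the sizes
`nᵢ = kᵢ + lᵢ`. -/
theorem Nshift_binomial_decomposition (k l : ℕ) (s : ℤ)
    (hk : 1 ≤ k) (hl : 1 ≤ l) (hs : s ≤ 0) :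
    Nshift k l s =
      ∑ r ∈ Finset.Icc (-s).toNat (k + l),
        ∑ f ∈ (Finset.univ : Finset (Fin r → Fin (k + 1) × Fin (l + 1))).filter
            (fun f => (∀ i, 1 ≤ ((f i).1 : ℕ) ∧ 1 ≤ ((f i).2 : ℕ)) ∧
              (∑ i, ((f i).1 : ℕ)) = k ∧ (∑ i, ((f i).2 : ℕ)) = l),
          compTerm r
            (fun i => if h : i < r then ((f ⟨i, h⟩).1 : ℕ) + ((f ⟨i, h⟩).2 : ℕ) else 0)
            (-s).toNat :=
  Nshift_binomial_decomposition_general k l s hk hs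
end
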